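/- arXiv:2106.03243 — 7 statements merged into one kernel-verified Lean document; each statement's English description precedes it below -/
import Mathlib

section
/- Let d, n be positive integers, let x_1, ..., x_n be vectors in ℝ^d, let V_0 be a symmetric positive definite d×d real matrix, and for t = 1, ..., n set V_t = V_0 + Σ_{i=1}^t x_i x_iᵀ. Then for every real b > 0, Σ_{t=1}^n min(b, x_tᵀ V_{t-1}⁻¹ x_t) ≤ (b / log(1 + b)) · log(det V_n / det V_0) ≤ (1 + b) · log(det V_n / det V_0). -/
/-!
By the matrix determinant lemma, `det V_{t+1} = det V_t * (1 + x_tᵀ V_t⁻¹ x_t)`, so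
`log (det V_n / det V_0)` telescopes to `∑ log (1 + x_tᵀ V_t⁻¹ x_t)`. Each term then dominates
`(log (1 + b) / b) * min b (x_tᵀ V_t⁻¹ x_t)` by concavity of `log`, and
`b / log (1 + b) ≤ 1 + b` is `1 - y⁻¹ ≤ log y` at `y = 1 + b`.
-/

open Matrix Finset Real

namespace Matrix

variable {m R : Type*} [Fintype m] [DecidableEq m] [CommRing R]

theorem det_add_vecMulVec {A : Matrix m m R} (hA : IsUnit A.det) (u v : m → R) :
    (A + vecMulVec u v).det = A.det * (1 + v ⬝ᵥ A⁻¹ *ᵥ u) := by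
  rw [vecMulVec_eq (ι := Unit), det_add_replicateCol_mul_replicateRow hA, Matrix.mul_assoc,
    ← replicateCol_mulVec, det_unique (n := Unit)]
  simp [replicateRow_mul_replicateCol_apply]

end Matrix

section Gram

variable {m : Type*} [Fintype m] {x : ℕ → m → ℝ} {V₀ : Matrix m m ℝ} {V : ℕ → Matrix m m ℝ}

theorem posDef_add_sum_vecMulVec_self (hV₀ : V₀.PosDef) (t : ℕ) :
    (V₀ + ∑ i ∈ range t, vecMulVec (x i) (x i)).PosDef :=
  hV₀.add_posSemidef <| posSemidef_sum _ fun i _ => by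
    simpa using posSemidef_vecMulVec_self_star (x i)

variable [DecidableEq m]

theorem dotProduct_inv_mulVec_nonneg (hV₀ : V₀.PosDef)
    (hV : ∀ t, V t = V₀ + ∑ i ∈ range t, vecMulVec (x i) (x i)) (t : ℕ) :
    0 ≤ x t ⬝ᵥ (V t)⁻¹ *ᵥ x t := by
  simpa using (hV t ▸ posDef_add_sum_vecMulVec_self hV₀ t).inv.posSemidef.dotProduct_mulVec_nonneg
    (x t)

theorem log_det_div_eq_sum_log (hV₀ : V₀.PosDef)
    (hV : ∀ t, V t = V₀ + ∑ i ∈ range t, vecMulVec (x i) (x i)) (n : ℕ) :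
    log ((V n).det / V₀.det) = ∑ t ∈ range n, log (1 + x t ⬝ᵥ (V t)⁻¹ *ᵥ x t) := by
  have hpos (t : ℕ) : (V t).PosDef := hV t ▸ posDef_add_sum_vecMulVec_self hV₀ t
  have hgain (t : ℕ) : 0 < 1 + x t ⬝ᵥ (V t)⁻¹ *ᵥ x t := by
    linarith [dotProduct_inv_mulVec_nonneg hV₀ hV t]
  refine (sum_range_induction _ (fun t => log ((V t).det / V₀.det)) (by simp [hV 0]) n
    fun t _ => ?_).symm
  rw [hV (t + 1), sum_range_succ, ← add_assoc, ← hV t,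
    det_add_vecMulVec (hpos t).det_pos.ne'.isUnit, mul_div_right_comm,
    log_mul (div_pos (hpos t).det_pos hV₀.det_pos).ne' (hgain t).ne']

end Gram

namespace Real

theorem min_mul_log_one_add_le {u b : ℝ} (hu : 0 ≤ u) (hb : 0 < b) :
    min b u * log (1 + b) ≤ b * log (1 + u) := by
  rcases le_total b u with hbu | hub
  · rw [min_eq_left hbu]
    gcongr
  · rw [min_eq_right hub]
    have hcomb : (1 - u / b) • (1 : ℝ) + (u / b) • (1 + b) = 1 + u := by
      simp only [smul_eq_mul]
      field_simp
      ring
    have hjensen := strictConcaveOn_log_Ioi.concaveOn.2 (x := 1) (y := 1 + b)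
      (Set.mem_Ioi.2 one_pos) (Set.mem_Ioi.2 (by linarith))
      (by rw [sub_nonneg, div_le_one hb]; exact hub)
      (div_nonneg hu hb.le) (sub_add_cancel _ _)
    rw [hcomb, smul_eq_mul, smul_eq_mul, log_one, mul_zero, zero_add, div_mul_eq_mul_div,
      div_le_iff₀ hb] at hjensen
    linarith

theorem div_log_one_add_le {b : ℝ} (hb : 0 < b) : b / log (1 + b) ≤ 1 + b := by
  have hlog := one_sub_inv_le_log_of_pos (x := 1 + b) (by linarith)
  rw [div_le_iff₀ (log_pos (by linarith))]
  calc b = (1 + b) * (1 - (1 + b)⁻¹) := by field_simp; ring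
    _ ≤ (1 + b) * log (1 + b) := by gcongr

end Real

theorem stmt_0_general (d n : ℕ)
    (x : ℕ → Fin d → ℝ) (V₀ : Matrix (Fin d) (Fin d) ℝ) (hV₀ : V₀.PosDef)
    (V : ℕ → Matrix (Fin d) (Fin d) ℝ)
    (hV : ∀ t, V t = V₀ + ∑ i ∈ Finset.range t, vecMulVec (x i) (x i))
    (b : ℝ) (hb : 0 < b) :
    (∑ t ∈ Finset.range n, min b (x t ⬝ᵥ (V t)⁻¹ *ᵥ x t))
      ≤ (b / Real.log (1 + b)) * Real.log ((V n).det / V₀.det) ∧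
    (b / Real.log (1 + b)) * Real.log ((V n).det / V₀.det)
      ≤ (1 + b) * Real.log ((V n).det / V₀.det) := by
  have hquad := dotProduct_inv_mulVec_nonneg hV₀ hV
  have hlog : 0 < log (1 + b) := log_pos (by linarith)
  rw [log_det_div_eq_sum_log hV₀ hV n]
  constructor
  · rw [mul_sum]
    gcongr with t
    rw [div_mul_eq_mul_div, le_div_iff₀ hlog]
    exact min_mul_log_one_add_le (hquad t) hb
  · gcongr
    · exact sum_nonneg fun t _ => log_nonneg (by linarith [hquad t])
    · exact div_log_one_add_le hb

/-- **Elliptical potential lemma.** -/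
theorem stmt_0 (d n : ℕ) (hd : 0 < d) (hn : 0 < n)
    (x : ℕ → Fin d → ℝ) (V₀ : Matrix (Fin d) (Fin d) ℝ) (hV₀ : V₀.PosDef)
    (V : ℕ → Matrix (Fin d) (Fin d) ℝ)
    (hV : ∀ t, V t = V₀ + ∑ i ∈ Finset.range t, vecMulVec (x i) (x i))
    (b : ℝ) (hb : 0 < b) :
    (∑ t ∈ Finset.range n, min b (x t ⬝ᵥ (V t)⁻¹ *ᵥ x t))
      ≤ (b / Real.log (1 + b)) * Real.log ((V n).det / V₀.det) ∧
    (b / Real.log (1 + b)) * Real.log ((V n).det / V₀.det)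
      ≤ (1 + b) * Real.log ((V n).det / V₀.det) :=
  stmt_0_general d n x V₀ hV₀ V hV b hb
end

section
/- Let n be a positive integer and let H and M be n×n real symmetric positive semidefinite matrices. Then log det(I + M) ≤ log det(I + H) + √n · ‖M − H‖_F, where ‖·‖_F denotes the Frobenius norm and I is the n×n identity matrix. -/
/-!
`log det` is concave on positive definite matrices, with gradient `P⁻¹` at `P`; after a
congruence this is `log x ≤ x - 1` applied to eigenvalues. Hence
`log det (1 + M) ≤ log det (1 + H) + tr ((1 + H)⁻¹ (M - H))`. Cauchy–Schwarz bounds the trace by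
`‖(1 + H)⁻¹‖_F ‖M - H‖_F`, and `‖(1 + H)⁻¹‖_F ≤ √n` because `1 - (1 + H)⁻²` is positive
semidefinite.
-/

open Matrix Finset

namespace Matrix

open scoped MatrixOrder

variable {ι : Type*} [Fintype ι]

theorem trace_mul_le_sqrt_mul_sqrt {κ : Type*} [Fintype κ] (A : Matrix ι κ ℝ)
    (B : Matrix κ ι ℝ) :
    (A * B).trace ≤ √(∑ i, ∑ j, A i j ^ 2) * √(∑ i, ∑ j, B i j ^ 2) := by
  have := Real.sum_mul_le_sqrt_mul_sqrt univ (fun p : ι × κ ↦ A p.1 p.2) (fun p ↦ B p.2 p.1)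
  simp only [← univ_product_univ, sum_product] at this
  rwa [sum_comm (f := fun i j ↦ B j i ^ 2)] at this

variable [DecidableEq ι]

theorem PosDef.log_det_le_trace_sub_card {A : Matrix ι ι ℝ} (hA : A.PosDef) :
    Real.log A.det ≤ A.trace - Fintype.card ι := by
  have hdet := hA.isHermitian.det_eq_prod_eigenvalues
  have htr := hA.isHermitian.trace_eq_sum_eigenvalues
  simp only [RCLike.ofReal_real_eq_id, id_eq] at hdet htr
  rw [hdet, htr, Real.log_prod fun i _ ↦ (hA.eigenvalues_pos i).ne', Fintype.card_eq_sum_ones,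
    Nat.cast_sum, Nat.cast_one, ← sum_sub_distrib]
  exact sum_le_sum fun i _ ↦ Real.log_le_sub_one_of_pos (hA.eigenvalues_pos i)

theorem PosDef.log_det_le_log_det_add_trace {P Q : Matrix ι ι ℝ} (hP : P.PosDef) (hQ : Q.PosDef) :
    Real.log Q.det ≤ Real.log P.det + (P⁻¹ * (Q - P)).trace := by
  obtain ⟨y, hy, hyy⟩ : ∃ y : Matrix ι ι ℝ, IsUnit y ∧ P⁻¹ = star y * y :=
    CStarAlgebra.isStrictlyPositive_iff_eq_star_mul_self.mp hP.inv.isStrictlyPositive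
  have hA : (y * Q * star y).PosDef := (IsUnit.posDef_star_right_conjugate_iff hy).mpr hQ
  have hdet : (y * Q * star y).det = Q.det * (P.det)⁻¹ := by
    have h := congrArg det hyy
    rw [det_nonsing_inv, Ring.inverse_eq_inv', det_mul] at h
    rw [det_mul, det_mul, h]
    ring
  have htr : (y * Q * star y).trace = (P⁻¹ * (Q - P)).trace + Fintype.card ι := by
    rw [trace_mul_cycle, ← hyy, mul_sub, nonsing_inv_mul _ hP.det_pos.ne'.isUnit, trace_sub,
      trace_one]
    ring
  have := hA.log_det_le_trace_sub_card
  rw [hdet, htr, Real.log_mul hQ.det_pos.ne' (inv_pos.mpr hP.det_pos).ne', Real.log_inv] at this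
  linarith

theorem PosSemidef.sum_sq_inv_one_add_le {H : Matrix ι ι ℝ} (hH : H.PosSemidef) :
    ∑ i, ∑ j, (1 + H)⁻¹ i j ^ 2 ≤ Fintype.card ι := by
  set Y := (1 + H)⁻¹
  have hP : (1 + H).PosDef := PosDef.one.add_posSemidef hH
  have hY : Yᴴ = Y := hP.inv.isHermitian
  have hsum : ∑ i, ∑ j, Y i j ^ 2 = (Y * Yᴴ).trace := by
    simp only [trace, diag_apply, mul_apply, conjTranspose_apply, star_trivial, sq]
  -- `1 - Y²` is the congruence of `(1 + H)² - 1 = 2H + H²` by `Y`.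
  have hpsd : (1 - Y * Y).PosSemidef := by
    have hsq : (H + H + Hᴴ * H).PosSemidef :=
      (hH.add hH).add (posSemidef_conjTranspose_mul_self H)
    have hYP : Y * (1 + H) = 1 := nonsing_inv_mul _ hP.det_pos.ne'.isUnit
    have hPY : (1 + H) * Y = 1 := mul_nonsing_inv _ hP.det_pos.ne'.isUnit
    convert hsq.mul_mul_conjTranspose_same Y using 1
    rw [hY, hH.isHermitian.eq]
    calc 1 - Y * Y = Y * (1 + H) * ((1 + H) * Y) - Y * Y := by rw [hYP, hPY, one_mul]
      _ = Y * (H + H + H * H) * Y := by noncomm_ring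
  have := hpsd.trace_nonneg
  rw [trace_sub, trace_one] at this
  rw [hsum, hY]
  linarith

end Matrix

theorem stmt_1_general (n : ℕ) (H M : Matrix (Fin n) (Fin n) ℝ)
    (hH : H.PosSemidef) (hM : M.PosSemidef) :
    Real.log (1 + M).det ≤ Real.log (1 + H).det
      + Real.sqrt n * Real.sqrt (∑ i, ∑ j, (M i j - H i j) ^ 2) := by
  have hP : (1 + H).PosDef := PosDef.one.add_posSemidef hH
  have hQ : (1 + M).PosDef := PosDef.one.add_posSemidef hM
  calc Real.log (1 + M).det ≤ Real.log (1 + H).det + ((1 + H)⁻¹ * (M - H)).trace := by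
        simpa only [add_sub_add_left_eq_sub] using hP.log_det_le_log_det_add_trace hQ
    _ ≤ Real.log (1 + H).det
          + √(∑ i, ∑ j, (1 + H)⁻¹ i j ^ 2) * √(∑ i, ∑ j, (M i j - H i j) ^ 2) := by
        gcongr
        exact trace_mul_le_sqrt_mul_sqrt _ _
    _ ≤ Real.log (1 + H).det + √n * √(∑ i, ∑ j, (M i j - H i j) ^ 2) := by
        gcongr
        simpa using hH.sum_sq_inv_one_add_le

/-- First-order bound on the log-determinant of `I + M` versus `I + H`
in terms of the Frobenius norm of `M - H`. -/
theorem stmt_1 (n : ℕ) (hn : 0 < n) (H M : Matrix (Fin n) (Fin n) ℝ)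
    (hH : H.PosSemidef) (hM : M.PosSemidef) :
    Real.log (1 + M).det ≤ Real.log (1 + H).det
      + Real.sqrt n * Real.sqrt (∑ i, ∑ j, (M i j - H i j) ^ 2) :=
  stmt_1_general n H M hH hM
end

section
/- Let t, p be positive integers, X ∈ ℝ^{t×p}, ξ ∈ ℝ^t, θ* ∈ ℝ^p. Set Z = XᵀX + I_p (which is symmetric positive definite) and define the ridge-regression estimator θ̂ = Z⁻¹ Xᵀ (X θ* + ξ). Then for every vector x ∈ ℝ^p, |xᵀ(θ̂ − θ*)| ≤ ‖x‖_{Z⁻¹} · (‖Xᵀξ‖_{Z⁻¹} + ‖θ*‖₂), and consequently ‖θ̂ − θ*‖_Z ≤ ‖Xᵀξ‖_{Z⁻¹} + ‖θ*‖₂. -/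
/-!
Since `Z = XᵀX + I`, one has `θ̂ - θ* = Z⁻¹ (Xᵀξ - θ*)`, so `xᵀ(θ̂ - θ*)` is the `Z⁻¹`-inner
product of `x` and `Xᵀξ - θ*`. Cauchy–Schwarz and the triangle inequality for the
`Z⁻¹`-seminorm bound it by `‖x‖_{Z⁻¹} (‖Xᵀξ‖_{Z⁻¹} + ‖θ*‖_{Z⁻¹})`, and `Z ≥ I` gives
`‖θ*‖_{Z⁻¹} ≤ ‖θ*‖₂`. Finally `‖Z⁻¹ d‖_Z = ‖d‖_{Z⁻¹}`.
-/

open Matrix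

namespace Matrix

variable {n : Type*} [Fintype n]

namespace PosSemidef

variable {M : Matrix n n ℝ}

theorem dotProduct_mulVec_nonneg' (hM : M.PosSemidef) (x : n → ℝ) : 0 ≤ x ⬝ᵥ M *ᵥ x := by
  simpa only [star_trivial] using hM.dotProduct_mulVec_nonneg x

theorem dotProduct_mulVec_mul_self_le (hM : M.PosSemidef) (x y : n → ℝ) :
    (x ⬝ᵥ M *ᵥ y) * (x ⬝ᵥ M *ᵥ y) ≤ (x ⬝ᵥ M *ᵥ x) * (y ⬝ᵥ M *ᵥ y) := by
  let _ := M.toSeminormedAddCommGroup hM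
  let _ := M.toInnerProductSpace hM
  have hinner : ∀ a b : n → ℝ, inner ℝ a b = a ⬝ᵥ M *ᵥ b := fun a b => by
    change (M *ᵥ b) ⬝ᵥ star a = _
    rw [star_trivial, dotProduct_comm]
  simpa only [hinner] using real_inner_mul_inner_self_le x y

theorem abs_dotProduct_mulVec_le (hM : M.PosSemidef) (x y : n → ℝ) :
    |x ⬝ᵥ M *ᵥ y| ≤ √(x ⬝ᵥ M *ᵥ x) * √(y ⬝ᵥ M *ᵥ y) := by
  rw [← Real.sqrt_mul (hM.dotProduct_mulVec_nonneg' x)]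
  exact Real.abs_le_sqrt (by simpa only [sq] using hM.dotProduct_mulVec_mul_self_le x y)

theorem sqrt_dotProduct_mulVec_sub_le (hM : M.PosSemidef) (u v : n → ℝ) :
    √((u - v) ⬝ᵥ M *ᵥ (u - v)) ≤ √(u ⬝ᵥ M *ᵥ u) + √(v ⬝ᵥ M *ᵥ v) := by
  have hsymm : v ⬝ᵥ M *ᵥ u = u ⬝ᵥ M *ᵥ v := by
    rw [dotProduct_mulVec, ← mulVec_transpose, dotProduct_comm,
      ← conjTranspose_eq_transpose_of_trivial, hM.isHermitian.eq]
  have hexpand : (u - v) ⬝ᵥ M *ᵥ (u - v) =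
      u ⬝ᵥ M *ᵥ u - 2 * (u ⬝ᵥ M *ᵥ v) + v ⬝ᵥ M *ᵥ v := by
    simp only [mulVec_sub, sub_dotProduct, dotProduct_sub, hsymm]
    ring
  have hcs := (abs_le.mp (hM.abs_dotProduct_mulVec_le u v)).1
  rw [Real.sqrt_le_left (by positivity), hexpand, add_sq,
    Real.sq_sqrt (hM.dotProduct_mulVec_nonneg' u), Real.sq_sqrt (hM.dotProduct_mulVec_nonneg' v)]
  linarith

end PosSemidef

variable [DecidableEq n]

theorem dotProduct_inv_add_one_mulVec_le {A : Matrix n n ℝ} (hA : A.PosSemidef) (v : n → ℝ) :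
    v ⬝ᵥ (A + 1)⁻¹ *ᵥ v ≤ v ⬝ᵥ v := by
  have hdet : IsUnit (A + 1).det := (PosDef.posSemidef_add hA PosDef.one).isUnit.map detMonoidHom
  set y := (A + 1)⁻¹ *ᵥ v
  have hv : v = A *ᵥ y + y := by
    have h : (A + 1) *ᵥ y = v := by rw [mulVec_mulVec, mul_nonsing_inv _ hdet, one_mulVec]
    rwa [add_mulVec, one_mulVec, eq_comm] at h
  have hAy : 0 ≤ A *ᵥ y ⬝ᵥ y := dotProduct_comm (A *ᵥ y) y ▸ hA.dotProduct_mulVec_nonneg' y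
  have hAyAy : 0 ≤ A *ᵥ y ⬝ᵥ A *ᵥ y := by
    simpa only [one_mulVec] using PosSemidef.one.dotProduct_mulVec_nonneg' (A *ᵥ y)
  conv_lhs => rw [hv]
  conv_rhs => rw [hv]
  simp only [add_dotProduct, dotProduct_add, dotProduct_comm y (A *ᵥ y)]
  linarith

theorem inv_mulVec_dotProduct_mulVec_inv_mulVec {Z : Matrix n n ℝ} (hZ : IsUnit Z.det)
    (d : n → ℝ) : Z⁻¹ *ᵥ d ⬝ᵥ Z *ᵥ Z⁻¹ *ᵥ d = d ⬝ᵥ Z⁻¹ *ᵥ d := by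
  rw [mulVec_mulVec, mul_nonsing_inv _ hZ, one_mulVec, dotProduct_comm]

end Matrix

theorem ridge_estimate_sub {t p : Type*} [Fintype t] [Fintype p] [DecidableEq p]
    (X : Matrix t p ℝ) (ξ : t → ℝ) (θ : p → ℝ) (hdet : IsUnit (Xᵀ * X + 1).det) :
    (Xᵀ * X + 1)⁻¹ *ᵥ (Xᵀ *ᵥ (X *ᵥ θ + ξ)) - θ = (Xᵀ * X + 1)⁻¹ *ᵥ (Xᵀ *ᵥ ξ - θ) := by
  have hθ : (Xᵀ * X + 1)⁻¹ *ᵥ ((Xᵀ * X + 1) *ᵥ θ) = θ := by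
    rw [mulVec_mulVec, nonsing_inv_mul _ hdet, one_mulVec]
  have hsplit : Xᵀ *ᵥ (X *ᵥ θ + ξ) = (Xᵀ * X + 1) *ᵥ θ + (Xᵀ *ᵥ ξ - θ) := by
    rw [mulVec_add, mulVec_mulVec, add_mulVec, one_mulVec]
    abel
  rw [hsplit, mulVec_add, hθ, add_sub_cancel_left]

theorem stmt_3_general (t p : ℕ)
    (X : Matrix (Fin t) (Fin p) ℝ) (ξ : Fin t → ℝ) (θs : Fin p → ℝ)
    (Z : Matrix (Fin p) (Fin p) ℝ) (hZ : Z = Xᵀ * X + 1)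
    (θhat : Fin p → ℝ) (hθhat : θhat = Z⁻¹ *ᵥ (Xᵀ *ᵥ (X *ᵥ θs + ξ))) :
    (∀ x : Fin p → ℝ,
      |x ⬝ᵥ (θhat - θs)| ≤ Real.sqrt (x ⬝ᵥ Z⁻¹ *ᵥ x) *
        (Real.sqrt ((Xᵀ *ᵥ ξ) ⬝ᵥ Z⁻¹ *ᵥ (Xᵀ *ᵥ ξ)) + Real.sqrt (∑ i, (θs i) ^ 2))) ∧
    Real.sqrt ((θhat - θs) ⬝ᵥ Z *ᵥ (θhat - θs)) ≤
      Real.sqrt ((Xᵀ *ᵥ ξ) ⬝ᵥ Z⁻¹ *ᵥ (Xᵀ *ᵥ ξ)) + Real.sqrt (∑ i, (θs i) ^ 2) := by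
  have hXX : (Xᵀ * X).PosSemidef := by
    simpa only [conjTranspose_eq_transpose_of_trivial] using posSemidef_conjTranspose_mul_self X
  have hZpd : Z.PosDef := hZ ▸ PosDef.posSemidef_add hXX PosDef.one
  have hdet : IsUnit Z.det := hZpd.isUnit.map detMonoidHom
  have hdiff : θhat - θs = Z⁻¹ *ᵥ (Xᵀ *ᵥ ξ - θs) := by
    subst hZ hθhat
    exact ridge_estimate_sub X ξ θs hdet
  have hθs : √(θs ⬝ᵥ Z⁻¹ *ᵥ θs) ≤ √(∑ i, θs i ^ 2) := by
    refine Real.sqrt_le_sqrt ?_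
    simpa only [hZ, dotProduct, sq] using dotProduct_inv_add_one_mulVec_le hXX θs
  have hnorm : √((Xᵀ *ᵥ ξ - θs) ⬝ᵥ Z⁻¹ *ᵥ (Xᵀ *ᵥ ξ - θs)) ≤
      √((Xᵀ *ᵥ ξ) ⬝ᵥ Z⁻¹ *ᵥ (Xᵀ *ᵥ ξ)) + √(∑ i, θs i ^ 2) :=
    (hZpd.inv.posSemidef.sqrt_dotProduct_mulVec_sub_le _ _).trans (by linarith)
  refine ⟨fun x => ?_, ?_⟩
  · rw [hdiff]
    exact (hZpd.inv.posSemidef.abs_dotProduct_mulVec_le _ _).trans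
      (mul_le_mul_of_nonneg_left hnorm (Real.sqrt_nonneg _))
  · rwa [hdiff, inv_mulVec_dotProduct_mulVec_inv_mulVec hdet]

/-- Self-normalized bound for the ridge-regression estimator. -/
theorem stmt_3 (t p : ℕ) (ht : 0 < t) (hp : 0 < p)
    (X : Matrix (Fin t) (Fin p) ℝ) (ξ : Fin t → ℝ) (θs : Fin p → ℝ)
    (Z : Matrix (Fin p) (Fin p) ℝ) (hZ : Z = Xᵀ * X + 1)
    (θhat : Fin p → ℝ) (hθhat : θhat = Z⁻¹ *ᵥ (Xᵀ *ᵥ (X *ᵥ θs + ξ))) :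
    (∀ x : Fin p → ℝ,
      |x ⬝ᵥ (θhat - θs)| ≤ Real.sqrt (x ⬝ᵥ Z⁻¹ *ᵥ x) *
        (Real.sqrt ((Xᵀ *ᵥ ξ) ⬝ᵥ Z⁻¹ *ᵥ (Xᵀ *ᵥ ξ)) + Real.sqrt (∑ i, (θs i) ^ 2))) ∧
    Real.sqrt ((θhat - θs) ⬝ᵥ Z *ᵥ (θhat - θs)) ≤
      Real.sqrt ((Xᵀ *ᵥ ξ) ⬝ᵥ Z⁻¹ *ᵥ (Xᵀ *ᵥ ξ)) + Real.sqrt (∑ i, (θs i) ^ 2) :=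
  stmt_3_general t p X ξ θs Z hZ θhat hθhat
end

section
/- Let T, p be positive integers, φ_1, ..., φ_T ∈ ℝ^p, δ ∈ (0, 1), S ≥ 0. Set Z_0 = I_p, and let Δ̂_t, Δ_t be real numbers satisfying Δ̂_t ≥ 0 and 0 ≤ Δ̂_t − Δ_t ≤ B_t, where γ_t = √(log det Z_t + 2 log(1/δ)) + S, B_t = 2 γ_{t-1} ‖φ_t‖_{Z_{t-1}⁻¹}, I_t = 1{Δ̂_t ≤ B_t}, and Z_t = Z_{t-1} + I_t φ_t φ_tᵀ for t = 1, ..., T. Then for every ε ∈ (0, 1/2), the number of queried labels satisfies Σ_{t=1}^T I_t ≤ #{t ∈ [T] : Δ_t² ≤ ε²} + (8/ε²) · (log det Z_T + 2 log(1/δ) + S² + 1/32) · log det Z_T. -/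
/-!
Each queried round is a rank-one update of `Z`, so by the matrix determinant lemma
`log det Z_T = ∑ log (1 + I_t x_t)` with `x_t = ‖φ_t‖²_{Z_t⁻¹}`, and `log (1 + x) ≥ x / (1 + x)`.
On a queried round `Δ̂_t ≤ B_t` together with `0 ≤ Δ̂_t` and `0 ≤ Δ̂_t - Δ_t ≤ B_t` gives
`|Δ_t| ≤ B_t`; if moreover `ε < |Δ_t|`, then `ε² ≤ B_t² = 4 γ_t² x_t ≤ 8 M x_t`, where
`M = log det Z_T + 2 log (1/δ) + S²`, and since `ε² < 1/4` such a round has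
`x_t / (1 + x_t) ≥ ε² / (8 (M + 1/32))`. Summing, there are at most
`8 (M + 1/32) / ε² · log det Z_T` of them.
-/

open Matrix Finset

theorem Matrix.det_add_vecMulVec_s10 {n R : Type*} [Fintype n] [DecidableEq n] [CommRing R]
    {A : Matrix n n R} (hA : IsUnit A.det) (u v : n → R) :
    (A + vecMulVec u v).det = A.det * (1 + v ⬝ᵥ A⁻¹ *ᵥ u) := by
  rw [vecMulVec_eq Unit, det_add_replicateCol_mul_replicateRow hA, det_unique (1 + _),
    Matrix.mul_assoc, ← replicateCol_mulVec, add_apply, one_apply_eq,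
    replicateRow_mul_replicateCol_apply]

lemma Real.mul_div_one_add_le_log_one_add_mul {c x : ℝ} (hx : 0 ≤ x) (hc₀ : 0 ≤ c)
    (hc₁ : c ≤ 1) : c * (x / (1 + x)) ≤ Real.log (1 + c * x) :=
  calc c * (x / (1 + x)) ≤ c * x / (1 + c * x) := by
        rw [mul_div_assoc']
        gcongr
        nlinarith
    _ = 1 - (1 + c * x)⁻¹ := by field_simp; ring
    _ ≤ Real.log (1 + c * x) := Real.one_sub_inv_le_log_of_pos (by positivity)

section RankOneUpdates

variable {n : Type*} [Fintype n] {T : ℕ} {Z : ℕ → Matrix n n ℝ} {c : ℕ → ℝ}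
  {φ : ℕ → n → ℝ}

lemma posDef_of_rankOne_updates (h₀ : (Z 0).PosDef) (hc : ∀ t < T, 0 ≤ c t)
    (hZ : ∀ t < T, Z (t + 1) = Z t + c t • vecMulVec (φ t) (φ t)) :
    ∀ t ≤ T, (Z t).PosDef := by
  intro t
  induction t with
  | zero => exact fun _ => h₀
  | succ t ih =>
    intro (ht : t < T)
    rw [hZ t ht]
    exact (ih ht.le).add_posSemidef ((posSemidef_vecMulVec_self_star (φ t)).smul (hc t ht))

variable [DecidableEq n]

lemma log_det_eq_add_sum_of_rankOne_updates (h₀ : (Z 0).PosDef) (hc : ∀ t < T, 0 ≤ c t)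
    (hZ : ∀ t < T, Z (t + 1) = Z t + c t • vecMulVec (φ t) (φ t)) :
    ∀ t ≤ T, Real.log (Z t).det =
      Real.log (Z 0).det + ∑ s ∈ range t, Real.log (1 + c s * (φ s ⬝ᵥ (Z s)⁻¹ *ᵥ φ s)) := by
  have hpd := posDef_of_rankOne_updates h₀ hc hZ
  intro t
  induction t with
  | zero => simp
  | succ t ih =>
    intro (ht : t < T)
    have hx : 0 ≤ φ t ⬝ᵥ (Z t)⁻¹ *ᵥ φ t :=
      (hpd t ht.le).inv.posSemidef.dotProduct_mulVec_nonneg (φ t)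
    rw [sum_range_succ, ← add_assoc, ← ih ht.le, hZ t ht, ← smul_vecMulVec,
      det_add_vecMulVec_s10 (hpd t ht.le).det_pos.ne'.isUnit, mulVec_smul, dotProduct_smul, smul_eq_mul,
      Real.log_mul (hpd t ht.le).det_pos.ne' (by nlinarith [hc t ht])]

lemma log_det_mono_of_rankOne_updates (h₀ : (Z 0).PosDef) (hc : ∀ t < T, 0 ≤ c t)
    (hZ : ∀ t < T, Z (t + 1) = Z t + c t • vecMulVec (φ t) (φ t)) :
    ∀ ⦃s t : ℕ⦄, s ≤ t → t ≤ T → Real.log (Z s).det ≤ Real.log (Z t).det := by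
  intro s t hst ht
  have hpd := posDef_of_rankOne_updates h₀ hc hZ
  rw [log_det_eq_add_sum_of_rankOne_updates h₀ hc hZ s (hst.trans ht),
    log_det_eq_add_sum_of_rankOne_updates h₀ hc hZ t ht, add_le_add_iff_left]
  refine sum_le_sum_of_subset_of_nonneg (range_subset_range.2 hst) fun r hr _ => ?_
  have hr : r < T := (mem_range.1 hr).trans_le ht
  exact Real.log_nonneg (le_add_of_nonneg_right (mul_nonneg (hc r hr)
    ((hpd r hr.le).inv.posSemidef.dotProduct_mulVec_nonneg (φ r))))

/-- The elliptical potential lemma. -/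
lemma sum_mul_div_one_add_le_log_det (h₀ : (Z 0).PosDef) (hc : ∀ t < T, c t ∈ Set.Icc 0 1)
    (hZ : ∀ t < T, Z (t + 1) = Z t + c t • vecMulVec (φ t) (φ t)) :
    ∑ t ∈ range T, c t * ((φ t ⬝ᵥ (Z t)⁻¹ *ᵥ φ t) / (1 + φ t ⬝ᵥ (Z t)⁻¹ *ᵥ φ t)) ≤
      Real.log (Z T).det - Real.log (Z 0).det := by
  have hc₀ : ∀ t < T, 0 ≤ c t := fun t ht => (hc t ht).1
  have hpd := posDef_of_rankOne_updates h₀ hc₀ hZ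
  rw [log_det_eq_add_sum_of_rankOne_updates h₀ hc₀ hZ T le_rfl, add_sub_cancel_left]
  refine sum_le_sum fun t ht => ?_
  rw [mem_range] at ht
  exact Real.mul_div_one_add_le_log_one_add_mul
    ((hpd t ht.le).inv.posSemidef.dotProduct_mulVec_nonneg (φ t)) (hc t ht).1 (hc t ht).2

end RankOneUpdates

lemma sum_le_card_filter_add_sum {ι : Type*} (s : Finset ι) (p : ι → Prop) [DecidablePred p]
    {f g : ι → ℝ} (hf : ∀ i ∈ s, p i → f i ≤ 1) (hg : ∀ i ∈ s, 0 ≤ g i)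
    (hfg : ∀ i ∈ s, ¬ p i → f i ≤ g i) :
    ∑ i ∈ s, f i ≤ #(s.filter p) + ∑ i ∈ s, g i := by
  rw [← sum_filter_add_sum_filter_not s p f, card_eq_sum_ones, Nat.cast_sum, Nat.cast_one]
  gcongr with i hi
  · exact hf i (mem_filter.1 hi).1 (mem_filter.1 hi).2
  · exact (sum_le_sum fun i hi => hfg i (mem_filter.1 hi).1 (mem_filter.1 hi).2).trans
      (sum_le_sum_of_subset_of_nonneg (filter_subset _ s) fun i hi _ => hg i hi)

lemma abs_le_of_optimistic_margin {a b B : ℝ} (ha : 0 ≤ a) (hl : 0 ≤ a - b) (hu : a - b ≤ B)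
    (hq : a ≤ B) : |b| ≤ B :=
  abs_le.2 ⟨by linarith, by linarith⟩

lemma sqrt_add_sq_le {a : ℝ} (ha : 0 ≤ a) (S : ℝ) : (√a + S) ^ 2 ≤ 2 * (a + S ^ 2) := by
  simpa [Real.sq_sqrt ha] using add_sq_le (a := √a) (b := S)

lemma sq_le_mul_of_lt_abs_le {ε Δ γ x M : ℝ} (hε : 0 ≤ ε) (hx : 0 ≤ x) (hγ : γ ^ 2 ≤ 2 * M)
    (hεΔ : ε < |Δ|) (hΔ : |Δ| ≤ 2 * γ * √x) : ε ^ 2 ≤ 8 * M * x :=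
  calc ε ^ 2 ≤ (2 * γ * √x) ^ 2 := pow_le_pow_left₀ hε (hεΔ.le.trans hΔ) 2
    _ = 4 * γ ^ 2 * x := by rw [mul_pow, mul_pow, Real.sq_sqrt hx]; ring
    _ ≤ 8 * M * x := by nlinarith

lemma one_le_mul_div_one_add_of_sq_le {ε x M : ℝ} (hε : 0 < ε) (hε' : ε < 1 / 2) (hx : 0 ≤ x)
    (h : ε ^ 2 ≤ 8 * M * x) : 1 ≤ 8 * (M + 1 / 32) / ε ^ 2 * (x / (1 + x)) := by
  have hε2 : ε ^ 2 * x ≤ 1 / 4 * x := by gcongr; nlinarith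
  rw [div_mul_div_comm, one_le_div (by positivity)]
  nlinarith

lemma query_indicator_le_mul {ε a b B γ x M i : ℝ} (hε : 0 < ε) (hε' : ε < 1 / 2)
    (hb : ε ^ 2 < b ^ 2) (ha : 0 ≤ a) (hl : 0 ≤ a - b) (hu : a - b ≤ B) (hx : 0 ≤ x)
    (hB : B = 2 * γ * √x) (hγ : γ ^ 2 ≤ 2 * M) (hi : i = if a ≤ B then 1 else 0) :
    i ≤ 8 * (M + 1 / 32) / ε ^ 2 * (i * (x / (1 + x))) := by
  subst hi
  split_ifs with hq
  · have hεb : ε < |b| := by simpa [abs_of_pos hε] using sq_lt_sq.1 hb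
    have hbB := hB ▸ abs_le_of_optimistic_margin ha hl hu hq
    rw [one_mul]
    exact one_le_mul_div_one_add_of_sq_le hε hε' hx (sq_le_mul_of_lt_abs_le hε.le hx hγ hεb hbB)
  · simp

theorem stmt_10_general (T p : ℕ)
    (φ : ℕ → Fin p → ℝ) (δ S : ℝ) (hδ : δ ∈ Set.Ioo (0 : ℝ) 1)
    (Z : ℕ → Matrix (Fin p) (Fin p) ℝ) (hZ0 : Z 0 = 1)
    (γ B I : ℕ → ℝ) (Δhat Δ : ℕ → ℝ)
    (hγ : ∀ t < T, γ t = Real.sqrt (Real.log (Z t).det + 2 * Real.log (1 / δ)) + S)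
    (hB : ∀ t < T, B t = 2 * γ t * Real.sqrt (φ t ⬝ᵥ (Z t)⁻¹ *ᵥ φ t))
    (hI : ∀ t < T, I t = if Δhat t ≤ B t then (1 : ℝ) else 0)
    (hZ : ∀ t < T, Z (t + 1) = Z t + I t • vecMulVec (φ t) (φ t))
    (hΔhat : ∀ t < T, 0 ≤ Δhat t)
    (hΔl : ∀ t < T, 0 ≤ Δhat t - Δ t)
    (hΔu : ∀ t < T, Δhat t - Δ t ≤ B t)
    (ε : ℝ) (hε : 0 < ε) (hε' : ε < 1 / 2) :
    ∑ t ∈ Finset.range T, I t ≤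
      ((Finset.range T).filter (fun t => (Δ t) ^ 2 ≤ ε ^ 2)).card
        + (8 / ε ^ 2) * (Real.log (Z T).det + 2 * Real.log (1 / δ) + S ^ 2 + 1 / 32)
            * Real.log (Z T).det := by
  have hI01 : ∀ t < T, I t ∈ Set.Icc (0 : ℝ) 1 := fun t ht => by
    rw [hI t ht]; split_ifs <;> norm_num
  have h₀ : (Z 0).PosDef := hZ0 ▸ PosDef.one
  have hpd := posDef_of_rankOne_updates h₀ (fun t ht => (hI01 t ht).1) hZ
  have hmono := log_det_mono_of_rankOne_updates h₀ (fun t ht => (hI01 t ht).1) hZ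
  have hlogZ : ∀ t ≤ T, 0 ≤ Real.log (Z t).det := fun t ht => by
    simpa [hZ0] using hmono (Nat.zero_le t) ht
  have hlogδ : 0 ≤ Real.log (1 / δ) := Real.log_nonneg ((one_le_div hδ.1).2 hδ.2.le)
  set x : ℕ → ℝ := fun t => φ t ⬝ᵥ (Z t)⁻¹ *ᵥ φ t
  have hx : ∀ t < T, 0 ≤ x t := fun t ht =>
    (hpd t ht.le).inv.posSemidef.dotProduct_mulVec_nonneg (φ t)
  set M := Real.log (Z T).det + 2 * Real.log (1 / δ) + S ^ 2
  have hγM : ∀ t < T, γ t ^ 2 ≤ 2 * M := fun t ht => by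
    rw [hγ t ht]
    refine (sqrt_add_sq_le (by linarith [hlogZ t ht.le]) S).trans ?_
    linarith [hmono ht.le le_rfl]
  have hM : 0 ≤ M := by linarith [hlogZ T le_rfl, sq_nonneg S]
  calc ∑ t ∈ range T, I t
      ≤ #((range T).filter (fun t => Δ t ^ 2 ≤ ε ^ 2)) +
          ∑ t ∈ range T, 8 * (M + 1 / 32) / ε ^ 2 * (I t * (x t / (1 + x t))) := by
        refine sum_le_card_filter_add_sum _ _ (fun t ht _ => (hI01 t (mem_range.1 ht)).2)
          (fun t ht => ?_) fun t ht hεΔ => ?_ <;> rw [mem_range] at ht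
        · have := hx t ht
          have := (hI01 t ht).1
          positivity
        · exact query_indicator_le_mul hε hε' (not_le.1 hεΔ) (hΔhat t ht) (hΔl t ht)
            (hΔu t ht) (hx t ht) (hB t ht) (hγM t ht) (hI t ht)
    _ ≤ #((range T).filter (fun t => Δ t ^ 2 ≤ ε ^ 2)) +
          8 * (M + 1 / 32) / ε ^ 2 * Real.log (Z T).det := by
        rw [← mul_sum]
        gcongr
        simpa [hZ0] using sum_mul_div_one_add_le_log_det h₀ hI01 hZ
    _ = _ := by ring

/-- Label-complexity bound for the frozen-NTK selective sampler. Rounds are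
indexed `0, ..., T-1`; `Z t` is the covariance matrix before round `t`
(`Z 0 = I`), and the quantities `γ, B, I, Z` are defined by the mutual
recursion of the algorithm. -/
theorem stmt_10 (T p : ℕ) (hT : 0 < T) (hp : 0 < p)
    (φ : ℕ → Fin p → ℝ) (δ S : ℝ) (hδ : δ ∈ Set.Ioo (0 : ℝ) 1) (hS : 0 ≤ S)
    (Z : ℕ → Matrix (Fin p) (Fin p) ℝ) (hZ0 : Z 0 = 1)
    (γ B I : ℕ → ℝ) (Δhat Δ : ℕ → ℝ)
    (hγ : ∀ t < T, γ t = Real.sqrt (Real.log (Z t).det + 2 * Real.log (1 / δ)) + S)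
    (hB : ∀ t < T, B t = 2 * γ t * Real.sqrt (φ t ⬝ᵥ (Z t)⁻¹ *ᵥ φ t))
    (hI : ∀ t < T, I t = if Δhat t ≤ B t then (1 : ℝ) else 0)
    (hZ : ∀ t < T, Z (t + 1) = Z t + I t • vecMulVec (φ t) (φ t))
    (hΔhat : ∀ t < T, 0 ≤ Δhat t)
    (hΔl : ∀ t < T, 0 ≤ Δhat t - Δ t)
    (hΔu : ∀ t < T, Δhat t - Δ t ≤ B t)
    (ε : ℝ) (hε : 0 < ε) (hε' : ε < 1 / 2) :
    ∑ t ∈ Finset.range T, I t ≤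
      ((Finset.range T).filter (fun t => (Δ t) ^ 2 ≤ ε ^ 2)).card
        + (8 / ε ^ 2) * (Real.log (Z T).det + 2 * Real.log (1 / δ) + S ^ 2 + 1 / 32)
            * Real.log (Z T).det :=
  stmt_10_general T p φ δ S hδ Z hZ0 γ B I Δhat Δ hγ hB hI hZ hΔhat hΔl hΔu ε hε hε'
end

section
/- Let (Ω, 𝓕, P) be a probability space with a filtration (𝓕_t)_{t≥0}, and let (Y_t)_{t≥1} be a martingale difference sequence, i.e., Y_t is 𝓕_t-measurable and E[Y_t | 𝓕_{t−1}] = 0 almost surely. Let (G_t)_{t≥1} and (H_t)_{t≥1} be predictable sequences (G_t, H_t are 𝓕_{t−1}-measurable) with −G_t ≤ Y_t ≤ H_t almost surely. Fix m > 0 and δ ∈ (0, 1), and set W_t = (1/4) Σ_{i=1}^t (G_i + H_i)². Then with probability at least 1 − δ, simultaneously for all t ∈ ℕ: Σ_{i=1}^t Y_i ≤ 1.44 · √( max(W_t, m) · ( 1.4 · log log( 2 · max(W_t/m, 1) ) + log(5.2/δ) ) ). -/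
/-!
For `λ ≥ 0` the process `exp (λ S_n - λ² W_n / 2)`, `S_n = ∑_{i ≤ n} Y_i`, is a nonnegative
supermartingale: conditionally on the past, `exp (λ Y)` lies below its secant through `-G` and `H`,
whose conditional mean is the moment generating function of a centred two-point law and is bounded
by Hoeffding's lemma. By Ville's inequality it exceeds `1 / δ_k` with probability at most `δ_k`.
Stitching: epoch `k` collects the times with `m 2^k ≤ max (W_t, m) < m 2^(k+1)`; there `λ_k` is
tuned to the epoch and the budget is `δ_k = δ / (5.2 ((k + 1) log 2)^1.4)`. A union bound over
the epochs costs `∑ δ_k ≤ δ`, which holds because `ζ(1.4) (log 2)^(-1.4) < 5.2`.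
-/

open MeasureTheory ProbabilityTheory Finset Real

section Scalar

lemma ConvexOn.le_add_slope_mul {s : Set ℝ} {f : ℝ → ℝ} (hf : ConvexOn ℝ s f) {a b y : ℝ}
    (ha : a ∈ s) (hb : b ∈ s) (hay : a ≤ y) (hyb : y ≤ b) :
    f y ≤ f a + slope f a b * (y - a) := by
  rcases hay.eq_or_lt with rfl | hay
  · simp
  have hy : y ∈ s := hf.1.ordConnected.out ha hb ⟨hay.le, hyb⟩
  have := hf.slope_mono ha ⟨hy, hay.ne'⟩ ⟨hb, (hay.trans_le hyb).ne'⟩ hyb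
  rw [slope_def_field, div_le_iff₀ (sub_pos.2 hay)] at this
  linarith

lemma Monotone.add_slope_mul_le {f : ℝ → ℝ} (hf : Monotone f) (a : ℝ) {b y : ℝ} (hyb : y ≤ b) :
    f a + slope f a b * (y - a) ≤ f b := by
  have hslope : 0 ≤ slope f a b := (hf.monotoneOn Set.univ).slope_nonneg trivial trivial
  have := sub_smul_slope f a b
  rw [smul_eq_mul, vsub_eq_sub] at this
  nlinarith

lemma two_point_mgf_le {g h : ℝ} (hg : 0 ≤ g) (hh : 0 ≤ h) (t : ℝ) :
    (h * exp (t * -g) + g * exp (t * h)) / (g + h) ≤ exp (t ^ 2 * (g + h) ^ 2 / 8) := by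
  rcases (add_nonneg hg hh).eq_or_lt with hgh | hgh
  · simp [← hgh]
  set p : unitInterval := ⟨h / (g + h), by positivity, (div_le_one hgh).2 (by linarith)⟩
  have hq : 1 - (p : ℝ) = g / (g + h) := by
    rw [show (p : ℝ) = h / (g + h) from rfl]
    field_simp
    ring
  have hint (φ : ℝ → ℝ) :
      ∫ x, φ x ∂Ber(-g, h, p) = h / (g + h) * φ (-g) + g / (g + h) * φ h := by
    rw [integral_bernoulliMeasure, hq]
    rfl
  have hmean : Ber(-g, h, p)[id] = 0 := by
    rw [hint]
    field_simp
    simp only [id]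
    ring
  have hmem : ∀ᵐ x ∂Ber(-g, h, p), id x ∈ Set.Icc (-g) h := by
    refine ae_add_measure_iff.2 ⟨Measure.ae_smul_measure ?_ _, Measure.ae_smul_measure ?_ _⟩ <;>
      refine (ae_dirac_iff measurableSet_Icc).2 ⟨?_, ?_⟩ <;> linarith
  have hoeffding :=
    (hasSubgaussianMGF_of_mem_Icc_of_integral_eq_zero aemeasurable_id hmem hmean).mgf_le t
  have hc : (((‖h - -g‖₊ / 2) ^ 2 : NNReal) : ℝ) = (g + h) ^ 2 / 4 := by
    simp [abs_of_nonneg (add_nonneg hh hg)]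
    ring
  rw [mgf, hint, hc] at hoeffding
  convert hoeffding using 1
  · field_simp
    simp only [id]
    ring_nf
  · ring_nf

lemma exp_sub_add_mul_slope_le_one {g h : ℝ} (hg : 0 ≤ g) (hh : 0 ≤ h) (t : ℝ) :
    exp (t * -g - t ^ 2 * (g + h) ^ 2 / 8) +
      g * slope (fun y ↦ exp (t * y - t ^ 2 * (g + h) ^ 2 / 8)) (-g) h ≤ 1 := by
  rcases (add_nonneg hg hh).eq_or_lt with hgh | hgh
  · obtain rfl : g = 0 := by linarith
    obtain rfl : h = 0 := by linarith
    simp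
  · set c := t ^ 2 * (g + h) ^ 2 / 8
    calc exp (t * -g - c) + g * slope (fun y ↦ exp (t * y - c)) (-g) h
        = (h * exp (t * -g) + g * exp (t * h)) / (g + h) / exp c := by
          rw [slope_def_field, sub_neg_eq_add, add_comm h g]
          simp only [exp_sub]
          field_simp
          ring
      _ ≤ 1 := (div_le_one (exp_pos c)).2 (two_point_mgf_le hg hh t)

lemma convexOn_exp_mul_sub (t c : ℝ) : ConvexOn ℝ Set.univ fun y ↦ exp (t * y - c) :=
  convexOn_exp.comp_affineMap ((t • AffineMap.id ℝ ℝ) - AffineMap.const ℝ ℝ c) |>.congr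
    fun y _ ↦ by simp

lemma exp_mul_sub_le_exp_two {t y g h : ℝ} (ht : 0 ≤ t) (hg : 0 ≤ g) (hyh : y ≤ h) :
    exp (t * y - t ^ 2 * (g + h) ^ 2 / 8) ≤ exp 2 := by
  have : t * y ≤ t * (g + h) := by gcongr; linarith
  gcongr
  nlinarith [sq_nonneg (t * (g + h) - 4)]

/-- `λ = √(√2 L / v)` minimises `λ V / 2 + L / λ` at `V = √2 v`; on `[v, 2 v]` it exceeds the
minimum `√(2 V L)` by a factor at most `(1 + √2) / 2^(5/4) < 1.44 / √2`. -/
lemma epoch_tradeoff_le {v V L : ℝ} (hv : 0 < v) (hL : 0 < L) (hvV : v ≤ V) (hVv : V ≤ 2 * v) :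
    √(√2 * L / v) * V / 2 + L / √(√2 * L / v) ≤ 1.44 * √(V * L) := by
  set s := √2 with hs
  have hs2 : s ^ 2 = 2 := sq_sqrt zero_le_two
  have hs_lb : 1.4 ≤ s := by rw [hs, le_sqrt (by norm_num) (by norm_num)]; norm_num
  set lam := √(s * L / v)
  have hlam : 0 < lam := sqrt_pos.2 (by positivity)
  have hlam2 : lam ^ 2 = s * L / v := sq_sqrt (by positivity)
  have hy2 : √(V * L) ^ 2 = V * L := sq_sqrt (by nlinarith)
  have hquad : (V / v) ^ 2 / 2 + 1 ≤ 1.0736 * s * (V / v) := by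
    have h1 : 1 ≤ V / v := (one_le_div hv).2 hvV
    have h2 : V / v ≤ 2 := (div_le_iff₀ hv).2 hVv
    nlinarith [mul_nonneg (sub_nonneg.2 h1) (sub_nonneg.2 h2)]
  have hsq : (lam ^ 2 * V / 2 + L) ^ 2 ≤ (1.44 * √(V * L) * lam) ^ 2 := by
    have e1 : lam ^ 2 * V / 2 + L = L * (s * (V / v) / 2 + 1) := by
      rw [hlam2]
      field_simp
    have e2 : (1.44 * √(V * L) * lam) ^ 2 = L ^ 2 * (2.0736 * s * (V / v)) := by
      rw [mul_pow, mul_pow, hy2, hlam2]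
      field_simp
      ring
    rw [e1, e2, mul_pow]
    refine mul_le_mul_of_nonneg_left ?_ (sq_nonneg L)
    nlinarith
  have hmul : (lam * V / 2 + L / lam) * lam ≤ 1.44 * √(V * L) * lam := by
    rw [show (lam * V / 2 + L / lam) * lam = lam ^ 2 * V / 2 + L by field_simp]
    exact le_of_sq_le_sq hsq (by positivity)
  exact le_of_mul_le_mul_right hmul hlam

end Scalar

section ZetaBound

lemma convexOn_rpow_neg {p : ℝ} (hp : 0 ≤ p) : ConvexOn ℝ (Set.Ioi 0) fun x : ℝ ↦ x ^ (-p) := by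
  have hlog : log '' Set.Ioi 0 = Set.univ :=
    Set.eq_univ_of_forall fun u ↦ ⟨exp u, exp_pos u, log_exp u⟩
  have hexp : ConvexOn ℝ Set.univ fun u ↦ exp (u * -p) :=
    convexOn_exp.comp_linearMap ((-p) • LinearMap.id) |>.congr fun u _ ↦ by simp [mul_comm]
  have hanti : AntitoneOn (fun u ↦ exp (u * -p)) Set.univ := fun u _ v _ huv ↦
    exp_le_exp.2 (mul_le_mul_of_nonpos_right huv (neg_nonpos.2 hp))
  refine ((hlog ▸ hexp).comp_concaveOn strictConcaveOn_log_Ioi.concaveOn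
    (hlog ▸ hanti)).congr fun x hx ↦ ?_
  simp [rpow_def_of_pos (Set.mem_Ioi.1 hx)]

/-- Midpoint rule for the convex integrand `x^(-p)` (Jensen):
`(c + 1/2)^(-p) ≤ ∫ x in c..c+1, x^(-p)`. -/
lemma rpow_neg_le_sub_rpow {p c : ℝ} (hp : 1 < p) (hc : 0 < c) :
    (c + 1 / 2) ^ (-p) ≤ (c ^ (1 - p) - (c + 1) ^ (1 - p)) / (p - 1) := by
  have hsub : Set.Icc c (c + 1) ⊆ Set.Ioi 0 := fun x hx ↦ hc.trans_le hx.1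
  have hcont : ContinuousOn (fun x : ℝ ↦ x ^ (-p)) (Set.Icc c (c + 1)) :=
    continuousOn_id.rpow_const fun x hx ↦ Or.inl (hsub hx).ne'
  have hconv := (convexOn_rpow_neg (p := p) (by linarith)).subset hsub (convex_Icc _ _)
  have hjensen := hconv.map_set_average_le hcont isClosed_Icc (μ := volume) (f := id)
    (by simp) (by simp) (ae_restrict_mem measurableSet_Icc) continuousOn_id.integrableOn_Icc
    hcont.integrableOn_Icc
  have hvol : volume.real (Set.Icc c (c + 1)) = 1 := by simp
  simp only [setAverage_eq, hvol, inv_one, one_smul, id, integral_Icc_eq_integral_Ioc,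
    ← intervalIntegral.integral_of_le (by linarith : c ≤ c + 1), integral_id] at hjensen
  rw [integral_rpow] at hjensen
  · convert hjensen using 1
    · ring_nf
    · rw [← neg_div_neg_eq]
      ring_nf
  · exact Or.inr ⟨by linarith, fun h ↦ by
      rcases Set.mem_uIcc.1 h with h | h <;> linarith [h.1, h.2]⟩

lemma tsum_rpow_neg_le {p a : ℝ} (hp : 1 < p) (ha : 0 < a) :
    ∑' k : ℕ, (a + 1 / 2 + k) ^ (-p) ≤ a ^ (1 - p) / (p - 1) := by
  refine tsum_le_of_sum_range_le (fun k ↦ by positivity) fun n ↦ ?_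
  calc ∑ k ∈ range n, (a + 1 / 2 + k) ^ (-p)
      ≤ ∑ k ∈ range n, ((a + k) ^ (1 - p) / (p - 1) - (a + (k + 1 : ℕ)) ^ (1 - p) / (p - 1)) := by
        refine sum_le_sum fun k _ ↦ ?_
        rw [← sub_div, Nat.cast_succ, ← add_assoc, add_right_comm]
        exact rpow_neg_le_sub_rpow hp (by positivity)
    _ = a ^ (1 - p) / (p - 1) - (a + n) ^ (1 - p) / (p - 1) := by
        rw [sum_range_sub' (fun k : ℕ ↦ (a + k) ^ (1 - p) / (p - 1))]
        simp
    _ ≤ a ^ (1 - p) / (p - 1) := by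
        have : 0 ≤ (a + n) ^ (1 - p) / (p - 1) := div_nonneg (by positivity) (by linarith)
        linarith

lemma rpow_neg_div_le {x q : ℝ} {k n : ℕ} (hx : 0 < x) (hq : 0 ≤ q) (hn : n ≠ 0)
    (h : 1 ≤ q ^ n * x ^ k) : x ^ (-(k / n : ℝ)) ≤ q := by
  rw [← pow_le_pow_iff_left₀ (by positivity) hq hn, ← rpow_natCast, ← rpow_mul hx.le,
    neg_mul, div_mul_cancel₀ _ (by exact_mod_cast hn), rpow_neg hx.le, rpow_natCast,
    inv_le_iff_one_le_mul₀ (by positivity)]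
  exact h

lemma summable_add_one_rpow_neg {p : ℝ} (hp : 1 < p) :
    Summable fun k : ℕ ↦ ((k : ℝ) + 1) ^ (-p) := by
  simpa using (summable_nat_add_iff 1).2 (summable_nat_rpow.2 (by linarith : -p < -1))

/-- `ζ(1.4) ≈ 3.1055` sits just below `5.2 (log 2)^1.4 ≈ 3.113`, so three terms are computed
before the midpoint bound takes over. -/
lemma tsum_add_one_rpow_neg_le : ∑' k : ℕ, ((k : ℝ) + 1) ^ (-(1.4 : ℝ)) ≤ 3.11 := by
  have h14 : (1.4 : ℝ) = ((7 : ℕ) / (5 : ℕ) : ℝ) := by norm_num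
  have h2 : (2 : ℝ) ^ (-(1.4 : ℝ)) ≤ 0.379 :=
    h14 ▸ rpow_neg_div_le (by norm_num) (by norm_num) (by norm_num) (by norm_num)
  have h3 : (3 : ℝ) ^ (-(1.4 : ℝ)) ≤ 0.2148 :=
    h14 ▸ rpow_neg_div_le (by norm_num) (by norm_num) (by norm_num) (by norm_num)
  have h35 : (3.5 : ℝ) ^ (1 - (1.4 : ℝ)) ≤ 0.6059 := by
    rw [show (1 - 1.4 : ℝ) = -((2 : ℕ) / (5 : ℕ) : ℝ) by norm_num]
    exact rpow_neg_div_le (by norm_num) (by norm_num) (by norm_num) (by norm_num)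
  have htail := tsum_rpow_neg_le (p := 1.4) (a := 3.5) (by norm_num) (by norm_num)
  have hshift : ∑' k : ℕ, ((k : ℝ) + 3 + 1) ^ (-(1.4 : ℝ)) =
      ∑' k : ℕ, ((3.5 : ℝ) + 1 / 2 + k) ^ (-(1.4 : ℝ)) := by
    congr 1
    ext k
    ring_nf
  rw [← (summable_add_one_rpow_neg (by norm_num)).sum_add_tsum_nat_add 3]
  simp only [sum_range_succ, sum_range_zero, Nat.cast_add, Nat.cast_ofNat]
  norm_num at h2 h3 hshift htail h35 ⊢
  rw [hshift]
  linarith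

end ZetaBound

section Stitching

/-- The crossing level of epoch `k` is `exp (stitchThreshold δ k) = 1 / δ_k`. -/
noncomputable def stitchThreshold (δ : ℝ) (k : ℕ) : ℝ := log (5.2 / δ) + 1.4 * log ((k + 1) * log 2)

noncomputable def stitchLambda (m δ : ℝ) (k : ℕ) : ℝ := √(√2 * stitchThreshold δ k / (m * 2 ^ k))

lemma stitchThreshold_pos {δ : ℝ} (hδ0 : 0 < δ) (hδ1 : δ < 1) (k : ℕ) :
    0 < stitchThreshold δ k := by
  have h52 : 1 < log (5.2 / δ) := by
    rw [lt_log_iff_exp_lt (by positivity), lt_div_iff₀ hδ0]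
    nlinarith [exp_one_lt_d9]
  have hlog2 : log (1 / 2) ≤ log ((k + 1) * log 2) := by
    refine log_le_log (by norm_num) ?_
    nlinarith [log_two_gt_d9, (Nat.cast_nonneg k : (0 : ℝ) ≤ k)]
  rw [one_div, log_inv] at hlog2
  have := log_two_lt_d9
  unfold stitchThreshold
  linarith

lemma exp_neg_stitchThreshold {δ : ℝ} (hδ0 : 0 < δ) (k : ℕ) :
    exp (-stitchThreshold δ k) = δ / 5.2 * log 2 ^ (-(1.4 : ℝ)) * ((k : ℝ) + 1) ^ (-(1.4 : ℝ)) := by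
  have hlog2 := log_pos one_lt_two
  rw [stitchThreshold, neg_add, exp_add, exp_neg, exp_log (by positivity), inv_div, mul_assoc,
    ← mul_rpow hlog2.le (by positivity), mul_comm (log 2), rpow_def_of_pos (by positivity),
    mul_comm]
  ring_nf

lemma summable_exp_neg_stitchThreshold {δ : ℝ} (hδ0 : 0 < δ) :
    Summable fun k ↦ exp (-stitchThreshold δ k) := by
  simp_rw [exp_neg_stitchThreshold hδ0]
  exact (summable_add_one_rpow_neg (by norm_num)).mul_left _

lemma tsum_exp_neg_stitchThreshold_le {δ : ℝ} (hδ0 : 0 < δ) :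
    ∑' k, exp (-stitchThreshold δ k) ≤ δ := by
  have hlog2 : log 2 ^ (-(1.4 : ℝ)) ≤ 1.672 := by
    rw [show (1.4 : ℝ) = ((7 : ℕ) / (5 : ℕ) : ℝ) by norm_num]
    refine rpow_neg_div_le (log_pos one_lt_two) (by norm_num) (by norm_num) ?_
    calc (1 : ℝ) ≤ 1.672 ^ 5 * 0.6931471803 ^ 7 := by norm_num
      _ ≤ 1.672 ^ 5 * log 2 ^ 7 := by gcongr; exact log_two_gt_d9.le
  simp_rw [exp_neg_stitchThreshold hδ0]
  rw [tsum_mul_left]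
  calc δ / 5.2 * log 2 ^ (-(1.4 : ℝ)) * ∑' k : ℕ, ((k : ℝ) + 1) ^ (-(1.4 : ℝ))
      ≤ δ / 5.2 * 1.672 * 3.11 := by gcongr; exact tsum_add_one_rpow_neg_le
    _ = δ * (1.672 * 3.11 / 5.2) := by ring
    _ ≤ δ := mul_le_of_le_one_right hδ0.le (by norm_num)

lemma le_of_forall_stitch {S W m δ : ℝ} (hm : 0 < m) (hδ0 : 0 < δ) (hδ1 : δ < 1)
    (h : ∀ k, stitchLambda m δ k * S - stitchLambda m δ k ^ 2 / 2 * W < stitchThreshold δ k) :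
    S ≤ 1.44 * √(max W m * (1.4 * log (log (2 * max (W / m) 1)) + log (5.2 / δ))) := by
  set V := max W m
  obtain ⟨k, hk, hk'⟩ := exists_nat_pow_near ((one_le_div hm).2 (le_max_right W m)) one_lt_two
  have hkV : m * 2 ^ k ≤ V := by rw [le_div_iff₀ hm] at hk; linarith
  have hVk : V ≤ 2 * (m * 2 ^ k) := by rw [div_lt_iff₀ hm, pow_succ] at hk'; linarith
  set L := stitchThreshold δ k
  have hL := stitchThreshold_pos hδ0 hδ1 k
  set lam := stitchLambda m δ k
  have hlam : 0 < lam := sqrt_pos.2 (by positivity)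
  have hS : S ≤ lam * V / 2 + L / lam := by
    have := h k
    have : lam ^ 2 / 2 * W ≤ lam ^ 2 / 2 * V := by gcongr; exact le_max_left W m
    rw [show lam * V / 2 + L / lam = (lam ^ 2 / 2 * V + L) / lam by field_simp,
      le_div_iff₀ hlam]
    linarith
  have hL' : L ≤ 1.4 * log (log (2 * max (W / m) 1)) + log (5.2 / δ) := by
    rw [← div_self hm.ne', max_div_div_right hm.le]
    have hk2 : ((k : ℝ) + 1) * log 2 ≤ log (2 * (V / m)) := by
      rw [← Nat.cast_succ, ← log_pow]
      exact log_le_log (by positivity) (by rw [pow_succ]; linarith)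
    have := log_le_log (by positivity) hk2
    unfold L stitchThreshold
    linarith
  calc S ≤ lam * V / 2 + L / lam := hS
    _ ≤ 1.44 * √(V * L) := epoch_tradeoff_le (by positivity) hL hkV hVk
    _ ≤ _ := by gcongr

end Stitching

section Probability

variable {Ω : Type*} {m m0 : MeasurableSpace Ω} {μ : Measure Ω}

lemma ae_nonneg_of_le_of_condExp_eq_zero (hm : m ≤ m0) [SigmaFinite (μ.trim hm)] {Y H : Ω → ℝ}
    (hY : Integrable Y μ) (hY0 : μ[Y|m] =ᵐ[μ] 0) (hH : StronglyMeasurable[m] H)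
    (hYH : ∀ᵐ ω ∂μ, Y ω ≤ H ω) : ∀ᵐ ω ∂μ, 0 ≤ H ω := by
  set A := {ω | H ω < 0}
  have hAm : MeasurableSet[m] A := hH.measurable measurableSet_Iio
  have hA : MeasurableSet A := hm A hAm
  have hneg : ∀ᵐ ω ∂μ.restrict A, Y ω < 0 := by
    filter_upwards [ae_restrict_of_ae hYH, ae_restrict_mem hA] with ω h hω using h.trans_lt hω
  have hint : ∫ ω in A, Y ω ∂μ = 0 := by
    rw [← setIntegral_condExp hm hY hAm, setIntegral_congr_ae hA (hY0.mono fun ω h _ ↦ h)]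
    simp
  have hzero : Y =ᵐ[μ.restrict A] 0 := by
    have := (setIntegral_eq_zero_iff_of_nonneg_ae (hneg.mono fun ω h ↦ (neg_pos.2 h).le)
      hY.neg.integrableOn).1 (by rw [integral_neg, hint, neg_zero])
    filter_upwards [this] with ω h using neg_eq_zero.1 h
  have : ∀ᵐ ω ∂μ.restrict A, False := by
    filter_upwards [hneg, hzero] with ω h h' using (h' ▸ h).false
  filter_upwards [(ae_restrict_iff' hA).1 this] with ω h using not_lt.1 h

lemma ae_nonneg_of_mem_Icc_of_condExp_eq_zero (hm : m ≤ m0) [SigmaFinite (μ.trim hm)]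
    {Y G H : Ω → ℝ}
    (hY : Integrable Y μ) (hY0 : μ[Y|m] =ᵐ[μ] 0) (hG : StronglyMeasurable[m] G)
    (hH : StronglyMeasurable[m] H) (hb : ∀ᵐ ω ∂μ, -G ω ≤ Y ω ∧ Y ω ≤ H ω) :
    ∀ᵐ ω ∂μ, 0 ≤ G ω ∧ 0 ≤ H ω := by
  have hG0 := ae_nonneg_of_le_of_condExp_eq_zero hm hY.neg
    ((condExp_neg Y m).trans (hY0.neg.trans (by simp))) hG (hb.mono fun ω h ↦ neg_le.1 h.1)
  have hH0 := ae_nonneg_of_le_of_condExp_eq_zero hm hY hY0 hH (hb.mono fun ω h ↦ h.2)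
  exact hG0.and hH0

lemma condExp_le_of_le_add_mul (hm : m ≤ m0) [IsFiniteMeasure μ] {X A B Y : Ω → ℝ} {C : ℝ}
    (hA : StronglyMeasurable[m] A) (hB : StronglyMeasurable[m] B) (hX : AEStronglyMeasurable X μ)
    (hY : Integrable Y μ) (hY0 : μ[Y|m] =ᵐ[μ] 0) (hX0 : 0 ≤ᵐ[μ] X) (hle : X ≤ᵐ[μ] A + B * Y)
    (hAC : ∀ᵐ ω ∂μ, |A ω| ≤ C) (hABC : ∀ᵐ ω ∂μ, A ω + B ω * Y ω ≤ C) :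
    μ[X|m] ≤ᵐ[μ] A := by
  have hAint : Integrable A μ := .of_bound (hA.mono hm).aestronglyMeasurable C hAC
  have hABint : Integrable (A + B * Y) μ :=
    .of_bound (hAint.aestronglyMeasurable.add ((hB.mono hm).aestronglyMeasurable.mul
      hY.aestronglyMeasurable)) C <| by
    filter_upwards [hX0, hle, hABC] with ω h0 h1 h2
    exact (norm_of_nonneg (h0.trans h1)).trans_le h2
  have hBY : Integrable (B * Y) μ := (hABint.sub hAint).congr (.of_forall fun ω ↦ by simp)
  have hXint : Integrable X μ := hABint.mono' hX <| by
    filter_upwards [hX0, hle] with ω h0 h1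
    exact (norm_of_nonneg h0).trans_le h1
  filter_upwards [condExp_mono (m := m) hXint hABint hle, condExp_add hAint hBY m,
    condExp_mul_of_stronglyMeasurable_left hB hBY hY, hY0] with ω h1 h2 h3 h4
  rw [h2, condExp_of_stronglyMeasurable hm hA hAint, Pi.add_apply, h3, Pi.mul_apply, h4] at h1
  simpa using h1

lemma condExp_exp_mul_sub_le_one (hm : m ≤ m0) [IsFiniteMeasure μ] {Y G H : Ω → ℝ} {t : ℝ}
    (ht : 0 ≤ t) (hY : Integrable Y μ) (hY0 : μ[Y|m] =ᵐ[μ] 0) (hG : StronglyMeasurable[m] G)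
    (hH : StronglyMeasurable[m] H) (hb : ∀ᵐ ω ∂μ, -G ω ≤ Y ω ∧ Y ω ≤ H ω) :
    μ[fun ω ↦ exp (t * Y ω - t ^ 2 * (G ω + H ω) ^ 2 / 8)|m] ≤ᵐ[μ] 1 := by
  set F := fun ω y ↦ exp (t * y - t ^ 2 * (G ω + H ω) ^ 2 / 8)
  have hF (ω : Ω) : Monotone (F ω) := fun a b hab ↦ exp_le_exp.2 (by gcongr)
  set A := fun ω ↦ F ω (-G ω) + G ω * slope (F ω) (-G ω) (H ω)
  set B := fun ω ↦ slope (F ω) (-G ω) (H ω)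
  have hsecant (ω : Ω) : A ω + B ω * Y ω = F ω (-G ω) + B ω * (Y ω - -G ω) := by
    simp only [A, B]
    ring
  have hGm := hG.measurable
  have hHm := hH.measurable
  have hA : StronglyMeasurable[m] A := by
    simp only [A, F, slope_def_field]
    exact Measurable.stronglyMeasurable (by fun_prop)
  have hB : StronglyMeasurable[m] B := by
    simp only [B, F, slope_def_field]
    exact Measurable.stronglyMeasurable (by fun_prop)
  have hX : AEStronglyMeasurable (fun ω ↦ F ω (Y ω)) μ := by
    have := hY.aemeasurable
    have := hGm.mono hm le_rfl
    have := hHm.mono hm le_rfl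
    exact (by fun_prop : AEMeasurable _ μ).aestronglyMeasurable
  have hGH0 := ae_nonneg_of_mem_Icc_of_condExp_eq_zero hm hY hY0 hG hH hb
  have hA1 : ∀ᵐ ω ∂μ, 0 ≤ A ω ∧ A ω ≤ 1 := by
    filter_upwards [hGH0] with ω ⟨hg, hh⟩
    have := ((hF ω).monotoneOn Set.univ).slope_nonneg (Set.mem_univ (-G ω)) (Set.mem_univ (H ω))
    exact ⟨by positivity, exp_sub_add_mul_slope_le_one hg hh t⟩
  refine (condExp_le_of_le_add_mul hm hA hB hX hY hY0 (.of_forall fun ω ↦ (exp_pos _).le) ?_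
    (C := exp 2) ?_ ?_).trans (hA1.mono fun ω h ↦ h.2)
  · filter_upwards [hb] with ω ⟨hl, hr⟩
    rw [Pi.add_apply, Pi.mul_apply, hsecant]
    exact (convexOn_exp_mul_sub _ _).le_add_slope_mul trivial trivial hl hr
  · filter_upwards [hA1] with ω h
    rw [abs_of_nonneg h.1]
    exact h.2.trans (one_le_exp zero_le_two)
  · filter_upwards [hb, hGH0] with ω ⟨_, hr⟩ ⟨hg, _⟩
    rw [hsecant]
    exact ((hF ω).add_slope_mul_le _ hr).trans (exp_mul_sub_le_exp_two ht hg le_rfl)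

noncomputable def hoeffdingProcess (t : ℝ) (Y G H : ℕ → Ω → ℝ) (n : ℕ) (ω : Ω) : ℝ :=
  exp (t * ∑ i ∈ Icc 1 n, Y i ω - t ^ 2 / 2 * (1 / 4 * ∑ i ∈ Icc 1 n, (G i ω + H i ω) ^ 2))

lemma hoeffdingProcess_zero (t : ℝ) (Y G H : ℕ → Ω → ℝ) : hoeffdingProcess t Y G H 0 = 1 := by
  ext ω
  simp [hoeffdingProcess]

lemma hoeffdingProcess_pos (t : ℝ) (Y G H : ℕ → Ω → ℝ) (n : ℕ) (ω : Ω) :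
    0 < hoeffdingProcess t Y G H n ω :=
  exp_pos _

lemma hoeffdingProcess_succ (t : ℝ) (Y G H : ℕ → Ω → ℝ) (n : ℕ) (ω : Ω) :
    hoeffdingProcess t Y G H (n + 1) ω = hoeffdingProcess t Y G H n ω *
      exp (t * Y (n + 1) ω - t ^ 2 * (G (n + 1) ω + H (n + 1) ω) ^ 2 / 8) := by
  rw [hoeffdingProcess, hoeffdingProcess, ← exp_add, sum_Icc_succ_top (by omega),
    sum_Icc_succ_top (by omega)]
  ring_nf

lemma stronglyAdapted_hoeffdingProcess {ℱ : Filtration ℕ m0} {Y G H : ℕ → Ω → ℝ} (t : ℝ)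
    (hY_meas : ∀ n, 1 ≤ n → StronglyMeasurable[ℱ n] (Y n))
    (hG : ∀ n, 1 ≤ n → StronglyMeasurable[ℱ (n - 1)] (G n))
    (hH : ∀ n, 1 ≤ n → StronglyMeasurable[ℱ (n - 1)] (H n)) :
    StronglyAdapted ℱ (hoeffdingProcess t Y G H) := by
  intro n
  induction n with
  | zero => rw [hoeffdingProcess_zero]; exact stronglyMeasurable_one
  | succ n ih =>
    have := (hY_meas (n + 1) (by omega)).measurable
    have := ((hG (n + 1) (by omega)).mono (ℱ.mono (Nat.sub_le _ _))).measurable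
    have := ((hH (n + 1) (by omega)).mono (ℱ.mono (Nat.sub_le _ _))).measurable
    rw [funext (hoeffdingProcess_succ t Y G H n)]
    exact (ih.mono (ℱ.mono n.le_succ)).mul (Measurable.stronglyMeasurable (by fun_prop))

lemma supermartingale_hoeffdingProcess [IsFiniteMeasure μ] {ℱ : Filtration ℕ m0}
    {Y G H : ℕ → Ω → ℝ} {t : ℝ} (ht : 0 ≤ t)
    (hY_meas : ∀ n, 1 ≤ n → StronglyMeasurable[ℱ n] (Y n))
    (hY_int : ∀ n, 1 ≤ n → Integrable (Y n) μ)
    (hY_mds : ∀ n, 1 ≤ n → μ[Y n | ℱ (n - 1)] =ᵐ[μ] 0)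
    (hG : ∀ n, 1 ≤ n → StronglyMeasurable[ℱ (n - 1)] (G n))
    (hH : ∀ n, 1 ≤ n → StronglyMeasurable[ℱ (n - 1)] (H n))
    (hbound : ∀ n, 1 ≤ n → ∀ᵐ ω ∂μ, -G n ω ≤ Y n ω ∧ Y n ω ≤ H n ω) :
    Supermartingale (hoeffdingProcess t Y G H) ℱ μ := by
  set M := hoeffdingProcess t Y G H
  have hM_meas := stronglyAdapted_hoeffdingProcess t hY_meas hG hH
  set X : ℕ → Ω → ℝ :=
    fun n ω ↦ exp (t * Y (n + 1) ω - t ^ 2 * (G (n + 1) ω + H (n + 1) ω) ^ 2 / 8)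
  have hMX (n : ℕ) : M (n + 1) = M n * X n := funext (hoeffdingProcess_succ t Y G H n)
  have hY0 (n : ℕ) : μ[Y (n + 1) | ℱ n] =ᵐ[μ] 0 := by simpa using hY_mds (n + 1) (by omega)
  have hG' (n : ℕ) : StronglyMeasurable[ℱ n] (G (n + 1)) := by simpa using hG (n + 1) (by omega)
  have hH' (n : ℕ) : StronglyMeasurable[ℱ n] (H (n + 1)) := by simpa using hH (n + 1) (by omega)
  have hX_le (n : ℕ) : ∀ᵐ ω ∂μ, X n ω ≤ exp 2 := by
    filter_upwards [hbound (n + 1) (by omega), ae_nonneg_of_mem_Icc_of_condExp_eq_zero (ℱ.le n)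
      (hY_int (n + 1) (by omega)) (hY0 n) (hG' n) (hH' n) (hbound (n + 1) (by omega))]
      with ω hb h0
    exact exp_mul_sub_le_exp_two ht h0.1 hb.2
  have hM_le (n : ℕ) : ∀ᵐ ω ∂μ, M n ω ≤ exp (2 * n) := by
    induction n with
    | zero => simp [M, hoeffdingProcess_zero]
    | succ n ih =>
      filter_upwards [ih, hX_le n] with ω h1 h2
      rw [hMX, Pi.mul_apply, Nat.cast_succ, mul_add_one, exp_add]
      exact mul_le_mul h1 h2 (exp_pos _).le (exp_pos _).le
  have hM_int (n : ℕ) : Integrable (M n) μ :=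
    .of_bound ((hM_meas n).mono (ℱ.le n)).aestronglyMeasurable (exp (2 * n)) <| by
      filter_upwards [hM_le n] with ω h
      rwa [norm_of_nonneg (hoeffdingProcess_pos t Y G H n ω).le]
  refine supermartingale_nat hM_meas hM_int fun n ↦ ?_
  have hX_int : Integrable (X n) μ := by
    have := (hY_int (n + 1) (by omega)).aemeasurable
    have := ((hG' n).mono (ℱ.le n)).measurable
    have := ((hH' n).mono (ℱ.le n)).measurable
    refine .of_bound (by fun_prop : AEMeasurable (X n) μ).aestronglyMeasurable (exp 2) ?_
    filter_upwards [hX_le n] with ω h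
    rwa [norm_of_nonneg (exp_pos _).le]
  filter_upwards [condExp_mul_of_stronglyMeasurable_left (hM_meas n) (hMX n ▸ hM_int (n + 1))
    hX_int, condExp_exp_mul_sub_le_one (ℱ.le n) ht (hY_int (n + 1) (by omega)) (hY0 n) (hG' n)
    (hH' n) (hbound (n + 1) (by omega))] with ω h1 h2
  rw [hMX, h1, Pi.mul_apply]
  exact mul_le_of_le_one_right (exp_pos _).le h2

lemma MeasureTheory.Supermartingale.measure_exists_ge_le [IsFiniteMeasure μ]
    {ℱ : Filtration ℕ m0} {M : ℕ → Ω → ℝ} (hM : Supermartingale M ℱ μ) (hM0 : 0 ≤ M) {ε : ℝ}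
    (hε : 0 < ε) :
    μ {ω | ∃ n, ε ≤ M n ω} ≤ ENNReal.ofReal (μ[M 0] / ε) := by
  set A : ℕ → Set Ω := fun n ↦ ⋃ k ∈ range (n + 1), {ω | ε ≤ M k ω}
  have hA (n : ℕ) : μ (A n) ≤ ENNReal.ofReal (μ[M 0] / ε) := by
    set τ : Ω → ℕ∞ := fun ω ↦ (hittingBtwn M (Set.Ici ε) 0 n ω : ℕ)
    have hτ : IsStoppingTime ℱ τ :=
      hM.stronglyAdapted.adapted.isStoppingTime_hittingBtwn measurableSet_Ici
    have hτn (ω : Ω) : τ ω ≤ n := WithTop.coe_le_coe.2 (hittingBtwn_le ω)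
    have hint : Integrable (stoppedValue M τ) μ :=
      integrable_stoppedValue ℕ hτ hM.integrable hτn
    have hopt : μ[stoppedValue M τ] ≤ μ[M 0] := by
      have := hM.neg.expected_stoppedValue_mono (isStoppingTime_const ℱ 0) hτ
        (fun ω ↦ WithTop.coe_le_coe.2 (Nat.zero_le _)) hτn
      simpa [stoppedValue, integral_neg] using this
    have hle : ∀ ω ∈ A n, ε ≤ stoppedValue M τ ω := fun ω hω ↦ by
      simp only [A, Set.mem_iUnion, mem_range, Nat.lt_succ_iff] at hω
      obtain ⟨k, hk, hεk⟩ := hω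
      exact stoppedValue_hittingBtwn_mem ⟨k, ⟨Nat.zero_le k, hk⟩, hεk⟩
    have hmeas : MeasurableSet (A n) := (range (n + 1)).measurableSet_biUnion fun k _ ↦
      measurableSet_le measurable_const ((hM.stronglyMeasurable k).mono (ℱ.le k)).measurable
    have h1 := setIntegral_ge_of_const_le_real hmeas (measure_ne_top μ _) hle hint.integrableOn
    have h2 := setIntegral_le_integral (s := A n) hint (.of_forall fun ω ↦ hM0 _ ω)
    rw [← ofReal_measureReal (measure_ne_top μ _)]
    refine ENNReal.ofReal_le_ofReal ((le_div_iff₀ hε).2 ?_)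
    linarith
  have hU : {ω | ∃ n, ε ≤ M n ω} = ⋃ n, A n := by
    ext ω
    simp only [A, Set.mem_ofPred_eq, Set.mem_iUnion, mem_range]
    exact ⟨fun ⟨n, hn⟩ ↦ ⟨n, n, n.lt_succ_self, hn⟩, fun ⟨_, k, _, hk⟩ ↦ ⟨k, hk⟩⟩
  have hmono : Monotone A := fun a b hab ↦
    Set.biUnion_subset_biUnion_left (coe_subset.2 (range_subset_range.2 (by omega)))
  rw [hU, hmono.measure_iUnion]
  exact iSup_le hA

lemma measure_iUnion_le_ofReal_tsum {s : ℕ → Set Ω} {p : ℕ → ℝ} (hp : ∀ k, 0 ≤ p k)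
    (hsum : Summable p) (hs : ∀ k, μ (s k) ≤ ENNReal.ofReal (p k)) :
    μ (⋃ k, s k) ≤ ENNReal.ofReal (∑' k, p k) :=
  calc μ (⋃ k, s k) ≤ ∑' k, μ (s k) := measure_iUnion_le s
    _ ≤ ∑' k, ENNReal.ofReal (p k) := ENNReal.tsum_le_tsum hs
    _ = ENNReal.ofReal (∑' k, p k) := (ENNReal.ofReal_tsum_of_nonneg hp hsum).symm

lemma ofReal_one_sub_le_prob_compl [IsProbabilityMeasure μ] {s : Set Ω} {δ : ℝ} (hδ : 0 ≤ δ)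
    (hs : μ s ≤ ENNReal.ofReal δ) : ENNReal.ofReal (1 - δ) ≤ μ sᶜ :=
  calc ENNReal.ofReal (1 - δ) = 1 - ENNReal.ofReal δ := by
        rw [ENNReal.ofReal_sub _ hδ, ENNReal.ofReal_one]
    _ ≤ 1 - μ s := tsub_le_tsub_left hs 1
    _ ≤ μ sᶜ := tsub_le_iff_left.2 (measure_univ (μ := μ) ▸ measure_univ_le_add_compl s)

end Probability

/-- Time-uniform Hoeffding bound for martingale difference sequences with
predictable bounds `-G t ≤ Y t ≤ H t`. -/
theorem stmt_12 {Ω : Type*} {m0 : MeasurableSpace Ω} (μ : Measure Ω) [IsProbabilityMeasure μ]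
    (ℱ : Filtration ℕ m0) (Y G H : ℕ → Ω → ℝ)
    (hY_meas : ∀ t, 1 ≤ t → StronglyMeasurable[ℱ t] (Y t))
    (hY_int : ∀ t, 1 ≤ t → Integrable (Y t) μ)
    (hY_mds : ∀ t, 1 ≤ t → μ[Y t | ℱ (t - 1)] =ᵐ[μ] 0)
    (hG : ∀ t, 1 ≤ t → StronglyMeasurable[ℱ (t - 1)] (G t))
    (hH : ∀ t, 1 ≤ t → StronglyMeasurable[ℱ (t - 1)] (H t))
    (hbound : ∀ t, 1 ≤ t → ∀ᵐ ω ∂μ, -G t ω ≤ Y t ω ∧ Y t ω ≤ H t ω)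
    (m δ : ℝ) (hm : 0 < m) (hδ : δ ∈ Set.Ioo (0 : ℝ) 1) :
    ENNReal.ofReal (1 - δ) ≤
      μ {ω | ∀ t : ℕ, 1 ≤ t →
        ∑ i ∈ Finset.Icc 1 t, Y i ω ≤
          1.44 * Real.sqrt
            (max ((1 / 4) * ∑ i ∈ Finset.Icc 1 t, (G i ω + H i ω) ^ 2) m *
              (1.4 * Real.log (Real.log
                  (2 * max (((1 / 4) * ∑ i ∈ Finset.Icc 1 t, (G i ω + H i ω) ^ 2) / m) 1))
                + Real.log (5.2 / δ)))} := by
  obtain ⟨hδ0, hδ1⟩ := hδ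
  set bad : ℕ → Set Ω := fun k ↦
    {ω | ∃ n, exp (stitchThreshold δ k) ≤ hoeffdingProcess (stitchLambda m δ k) Y G H n ω}
  have hbad (k : ℕ) : μ (bad k) ≤ ENNReal.ofReal (exp (-stitchThreshold δ k)) := by
    have := (supermartingale_hoeffdingProcess (t := stitchLambda m δ k) (sqrt_nonneg _) hY_meas
      hY_int hY_mds hG hH hbound).measure_exists_ge_le
      (fun n ω ↦ (hoeffdingProcess_pos _ Y G H n ω).le) (exp_pos (stitchThreshold δ k))
    simpa [hoeffdingProcess_zero, exp_neg] using this
  have hunion : μ (⋃ k, bad k) ≤ ENNReal.ofReal δ :=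
    (measure_iUnion_le_ofReal_tsum (fun k ↦ (exp_pos _).le)
      (summable_exp_neg_stitchThreshold hδ0) hbad).trans
      (ENNReal.ofReal_le_ofReal (tsum_exp_neg_stitchThreshold_le hδ0))
  refine (ofReal_one_sub_le_prob_compl hδ0.le hunion).trans (measure_mono fun ω hω t _ ↦ ?_)
  simp only [bad, Set.mem_compl_iff, Set.mem_iUnion, Set.mem_ofPred_eq, not_exists, not_le] at hω
  exact le_of_forall_stitch hm hδ0 hδ1 fun k ↦ exp_lt_exp.1 (hω k t)
end

section
/- Let (Ω, 𝓕, P) be a probability space with a filtration (𝓕_k)_{k≥0}, and let (X_k)_{k≥1} be {0,1}-valued random variables with X_k 𝓕_k-measurable and P(X_k = 1 | 𝓕_{k−1}) = p_k almost surely, where each p_k is 𝓕_{k−1}-measurable with values in [0, 1], p_1 > 0 is deterministic, and Σ_{k=1}^t p_k (1 − p_k) ≤ p_1 · t almost surely for every t. Then for every δ ∈ (0, 1), with probability at least 1 − δ, simultaneously for all t ∈ ℕ: Σ_{k=1}^t X_k ≤ (3/2) Σ_{k=1}^t p_k + 1.45 · L(t, δ), where L(t, δ) = log( 5.2 · (log(2t))^{1.4}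 / δ ). -/
open MeasureTheory Finset

/-!
With `θ = log 2` (so that `e^θ - 1 = 1`), the process `2 ^ (∑ X) * e ^ (-∑ p)` is a nonnegative
supermartingale starting at `1`: since `X_k ∈ {0, 1}`, `E[2 ^ X_k | 𝓕_{k-1}] = 1 + p_k ≤ e ^ p_k`.
Ville's maximal inequality bounds by `δ` the probability that it ever reaches `1 / δ`; off that
event `∑ X ≤ (∑ p + log (1/δ)) / log 2`, and `1 / log 2 < 1.45` while `log (1/δ) ≤ L(t, δ)`.
-/

namespace MeasureTheory.Supermartingale

variable {Ω : Type*} {m0 : MeasurableSpace Ω} {μ : Measure Ω} [IsFiniteMeasure μ]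
  {ℱ : Filtration ℕ m0} {f : ℕ → Ω → ℝ}

theorem integral_stoppedValue_le (hf : Supermartingale f ℱ μ) {τ : Ω → ℕ∞}
    (hτ : IsStoppingTime ℱ τ) {N : ℕ} (hτN : ∀ ω, τ ω ≤ N) :
    ∫ ω, stoppedValue f τ ω ∂μ ≤ ∫ ω, f 0 ω ∂μ := by
  have h := hf.neg.expected_stoppedValue_mono (isStoppingTime_const ℱ 0) hτ
    (fun _ => zero_le) hτN
  simpa [stoppedValue, integral_neg] using h

theorem measure_exists_le_le_up_to (hf : Supermartingale f ℱ μ) (hnonneg : 0 ≤ f) {ε : ℝ}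
    (hε : 0 < ε) (N : ℕ) :
    μ {ω | ∃ n ≤ N, ε ≤ f n ω} ≤ ENNReal.ofReal ((∫ ω, f 0 ω ∂μ) / ε) := by
  set τ : Ω → ℕ∞ := fun ω => (hittingBtwn f (Set.Ici ε) 0 N ω : ℕ)
  have hτ : IsStoppingTime ℱ τ :=
    hf.stronglyAdapted.adapted.isStoppingTime_hittingBtwn measurableSet_Ici
  have hτN : ∀ ω, τ ω ≤ N := fun ω => WithTop.coe_le_coe.2 (hittingBtwn_le ω)
  have hint : Integrable (stoppedValue f τ) μ := integrable_stoppedValue ℕ hτ hf.integrable hτN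
  have hsub : {ω | ∃ n ≤ N, ε ≤ f n ω} ⊆ {ω | ε ≤ stoppedValue f τ ω} :=
    fun ω ⟨n, hn, hfn⟩ => stoppedValue_hittingBtwn_mem ⟨n, ⟨Nat.zero_le _, hn⟩, hfn⟩
  have hmarkov : ε * μ.real {ω | ε ≤ stoppedValue f τ ω} ≤ ∫ ω, f 0 ω ∂μ :=
    (mul_meas_ge_le_integral_of_nonneg (Filter.Eventually.of_forall fun ω => hnonneg _ ω)
      hint ε).trans (hf.integral_stoppedValue_le hτ hτN)
  refine (measure_mono hsub).trans ?_
  rw [ENNReal.le_ofReal_iff_toReal_le (measure_ne_top _ _)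
    (div_nonneg (integral_nonneg fun ω => hnonneg 0 ω) hε.le), le_div_iff₀ hε, mul_comm]
  exact hmarkov

/-- Ville's inequality. -/
theorem measure_exists_le_le (hf : Supermartingale f ℱ μ) (hnonneg : 0 ≤ f) {ε : ℝ}
    (hε : 0 < ε) :
    μ {ω | ∃ n, ε ≤ f n ω} ≤ ENNReal.ofReal ((∫ ω, f 0 ω ∂μ) / ε) := by
  have hunion : {ω | ∃ n, ε ≤ f n ω} = ⋃ N : ℕ, {ω | ∃ n ≤ N, ε ≤ f n ω} := by
    ext ω
    simp only [Set.mem_ofPred_eq, Set.mem_iUnion]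
    exact ⟨fun ⟨n, hn⟩ => ⟨n, n, le_rfl, hn⟩, fun ⟨_, n, _, hn⟩ => ⟨n, hn⟩⟩
  have hmono : Monotone fun N : ℕ => {ω | ∃ n ≤ N, ε ≤ f n ω} :=
    fun _ _ hab _ ⟨n, hn, h⟩ => ⟨n, hn.trans hab, h⟩
  rw [hunion, hmono.measure_iUnion]
  exact iSup_le (hf.measure_exists_le_le_up_to hnonneg hε)

end MeasureTheory.Supermartingale

theorem abs_sum_Icc_le_of_abs_le_one {a : ℕ → ℝ} {t : ℕ} (ha : ∀ k ∈ Icc 1 t, |a k| ≤ 1) :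
    |∑ k ∈ Icc 1 t, a k| ≤ t := by
  calc |∑ k ∈ Icc 1 t, a k| ≤ ∑ k ∈ Icc 1 t, |a k| := abs_sum_le_sum_abs _ _
    _ ≤ ∑ _k ∈ Icc 1 t, (1 : ℝ) := sum_le_sum ha
    _ = t := by simp

theorem Real.exp_mul_of_eq_zero_or_eq_one (θ : ℝ) {x : ℝ} (hx : x = 0 ∨ x = 1) :
    Real.exp (θ * x) = 1 + (Real.exp θ - 1) * x := by
  rcases hx with rfl | rfl <;> simp

section ZeroOne

variable {Ω : Type*} {m0 : MeasurableSpace Ω} {μ : Measure Ω} [IsFiniteMeasure μ] {Y : Ω → ℝ}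

theorem integrable_exp_mul_of_eq_zero_or_eq_one (θ : ℝ)
    (hY01 : ∀ ω, Y ω = 0 ∨ Y ω = 1) (hYmeas : AEStronglyMeasurable Y μ) :
    Integrable (fun ω => Real.exp (θ * Y ω)) μ :=
  .of_bound (Real.continuous_exp.comp_aestronglyMeasurable (hYmeas.const_mul θ)) (max 1 (Real.exp θ))
    (Filter.Eventually.of_forall fun ω => by rcases hY01 ω with h | h <;> simp [h])

theorem condExp_exp_mul_eq {m : MeasurableSpace Ω} (hm : m ≤ m0) (θ : ℝ)
    {q : Ω → ℝ} (hY01 : ∀ ω, Y ω = 0 ∨ Y ω = 1) (hYmeas : AEStronglyMeasurable[m0] Y μ)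
    (hcond : μ[Y | m] =ᵐ[μ] q) :
    μ[fun ω => Real.exp (θ * Y ω) | m] =ᵐ[μ] fun ω => 1 + (Real.exp θ - 1) * q ω := by
  have hYint : Integrable Y μ := .of_bound hYmeas 1 (Filter.Eventually.of_forall fun ω => by
    rcases hY01 ω with h | h <;> simp [h])
  have hexp : (fun ω => Real.exp (θ * Y ω)) = (fun _ => (1 : ℝ)) + (Real.exp θ - 1) • Y := by
    ext ω
    simp [Real.exp_mul_of_eq_zero_or_eq_one θ (hY01 ω)]
  rw [hexp]
  filter_upwards [condExp_add (integrable_const (1 : ℝ)) (hYint.smul (Real.exp θ - 1)) m,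
    condExp_smul (Real.exp θ - 1) Y m, hcond] with ω h1 h2 h3
  simp [h1, h2, h3, condExp_const hm]

end ZeroOne

section CompensatedExp

variable {Ω : Type*} {m0 : MeasurableSpace Ω} {μ : Measure Ω} {ℱ : Filtration ℕ m0}
  {X p : ℕ → Ω → ℝ}

noncomputable def compensatedExp (θ : ℝ) (X p : ℕ → Ω → ℝ) (t : ℕ) (ω : Ω) : ℝ :=
  Real.exp (θ * ∑ k ∈ Icc 1 t, X k ω - (Real.exp θ - 1) * ∑ k ∈ Icc 1 t, p k ω)

theorem compensatedExp_zero (θ : ℝ) (X p : ℕ → Ω → ℝ) : compensatedExp θ X p 0 = 1 := by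
  ext ω
  simp [compensatedExp]

theorem compensatedExp_pos (θ : ℝ) (X p : ℕ → Ω → ℝ) (t : ℕ) (ω : Ω) :
    0 < compensatedExp θ X p t ω :=
  Real.exp_pos _

theorem compensatedExp_succ (θ : ℝ) (X p : ℕ → Ω → ℝ) (t : ℕ) (ω : Ω) :
    compensatedExp θ X p (t + 1) ω = compensatedExp θ X p t ω *
      Real.exp (-((Real.exp θ - 1) * p (t + 1) ω)) * Real.exp (θ * X (t + 1) ω) := by
  simp only [compensatedExp, sum_Icc_succ_top (Nat.le_add_left 1 t), ← Real.exp_add]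
  ring_nf

theorem stronglyAdapted_compensatedExp (θ : ℝ)
    (hXmeas : ∀ k, 1 ≤ k → StronglyMeasurable[ℱ k] (X k))
    (hpmeas : ∀ k, 1 ≤ k → StronglyMeasurable[ℱ (k - 1)] (p k)) :
    StronglyAdapted ℱ (compensatedExp θ X p) := by
  intro t
  refine Real.continuous_exp.comp_stronglyMeasurable
    (((stronglyMeasurable_fun_sum _ fun k hk => ?_).const_mul θ).sub
      ((stronglyMeasurable_fun_sum _ fun k hk => ?_).const_mul _))
  all_goals rw [mem_Icc] at hk
  · exact (hXmeas k hk.1).mono (ℱ.mono hk.2)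
  · exact (hpmeas k hk.1).mono (ℱ.mono ((Nat.sub_le k 1).trans hk.2))

theorem compensatedExp_le (θ : ℝ) (hX01 : ∀ k, 1 ≤ k → ∀ ω, X k ω = 0 ∨ X k ω = 1)
    (hp01 : ∀ k, 1 ≤ k → ∀ ω, p k ω ∈ Set.Icc (0 : ℝ) 1) (t : ℕ) (ω : Ω) :
    compensatedExp θ X p t ω ≤ Real.exp ((|θ| + |Real.exp θ - 1|) * t) := by
  have hX : |∑ k ∈ Icc 1 t, X k ω| ≤ t := abs_sum_Icc_le_of_abs_le_one fun k hk => by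
    rcases hX01 k (mem_Icc.1 hk).1 ω with h | h <;> simp [h]
  have hp : |∑ k ∈ Icc 1 t, p k ω| ≤ t := abs_sum_Icc_le_of_abs_le_one fun k hk => by
    obtain ⟨h0, h1⟩ := hp01 k (mem_Icc.1 hk).1 ω
    exact abs_le.2 ⟨by linarith, h1⟩
  refine Real.exp_le_exp.2 ((le_abs_self _).trans ?_)
  calc _ ≤ |θ * ∑ k ∈ Icc 1 t, X k ω| + |(Real.exp θ - 1) * ∑ k ∈ Icc 1 t, p k ω| :=
        abs_sub _ _
    _ ≤ |θ| * t + |Real.exp θ - 1| * t := by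
        rw [abs_mul, abs_mul]
        gcongr
    _ = _ := by ring

theorem integrable_compensatedExp [IsFiniteMeasure μ] (θ : ℝ)
    (hX01 : ∀ k, 1 ≤ k → ∀ ω, X k ω = 0 ∨ X k ω = 1)
    (hXmeas : ∀ k, 1 ≤ k → StronglyMeasurable[ℱ k] (X k))
    (hpmeas : ∀ k, 1 ≤ k → StronglyMeasurable[ℱ (k - 1)] (p k))
    (hp01 : ∀ k, 1 ≤ k → ∀ ω, p k ω ∈ Set.Icc (0 : ℝ) 1) (t : ℕ) :
    Integrable (compensatedExp θ X p t) μ :=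
  .of_bound ((stronglyAdapted_compensatedExp θ hXmeas hpmeas t).mono (ℱ.le t)).aestronglyMeasurable
    _ (Filter.Eventually.of_forall fun ω => by
      rw [Real.norm_of_nonneg (compensatedExp_pos θ X p t ω).le]
      exact compensatedExp_le θ hX01 hp01 t ω)


theorem condExp_compensatedExp_succ_le [IsFiniteMeasure μ] (θ : ℝ)
    (hX01 : ∀ k, 1 ≤ k → ∀ ω, X k ω = 0 ∨ X k ω = 1)
    (hXmeas : ∀ k, 1 ≤ k → StronglyMeasurable[ℱ k] (X k))
    (hpmeas : ∀ k, 1 ≤ k → StronglyMeasurable[ℱ (k - 1)] (p k))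
    (hp01 : ∀ k, 1 ≤ k → ∀ ω, p k ω ∈ Set.Icc (0 : ℝ) 1)
    (hcond : ∀ k, 1 ≤ k → μ[X k | ℱ (k - 1)] =ᵐ[μ] p k) (t : ℕ) :
    μ[compensatedExp θ X p (t + 1) | ℱ t] ≤ᵐ[μ] compensatedExp θ X p t := by
  have ht : 1 ≤ t + 1 := Nat.le_add_left 1 t
  set c := Real.exp θ - 1
  set h : Ω → ℝ := fun ω => compensatedExp θ X p t ω * Real.exp (-(c * p (t + 1) ω))
  have hpt : StronglyMeasurable[ℱ t] (p (t + 1)) := by simpa using hpmeas (t + 1) ht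
  have hh : StronglyMeasurable[ℱ t] h :=
    (stronglyAdapted_compensatedExp θ hXmeas hpmeas t).mul
      (Real.continuous_exp.comp_stronglyMeasurable (hpt.const_mul _).neg)
  have hsucc : compensatedExp θ X p (t + 1) = h * fun ω => Real.exp (θ * X (t + 1) ω) :=
    funext (compensatedExp_succ θ X p t)
  have hY : μ[fun ω => Real.exp (θ * X (t + 1) ω) | ℱ t] =ᵐ[μ] fun ω => 1 + c * p (t + 1) ω :=
    condExp_exp_mul_eq (ℱ.le t) θ (hX01 (t + 1) ht)
      ((hXmeas (t + 1) ht).mono (ℱ.le _)).aestronglyMeasurable (by simpa using hcond (t + 1) ht)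
  have hYint : Integrable (fun ω => Real.exp (θ * X (t + 1) ω)) μ :=
    integrable_exp_mul_of_eq_zero_or_eq_one θ (hX01 (t + 1) ht)
      ((hXmeas (t + 1) ht).mono (ℱ.le _)).aestronglyMeasurable
  have hdrift (x : ℝ) : Real.exp (-x) * (1 + x) ≤ 1 := by
    calc _ ≤ Real.exp (-x) * Real.exp x := by gcongr; linarith [Real.add_one_le_exp x]
      _ = 1 := by rw [← Real.exp_add]; simp
  filter_upwards [condExp_mul_of_stronglyMeasurable_left hh
    (hsucc ▸ integrable_compensatedExp θ hX01 hXmeas hpmeas hp01 (t + 1)) hYint, hY]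
    with ω h1 h2
  rw [hsucc, h1, Pi.mul_apply, h2]
  calc h ω * (1 + c * p (t + 1) ω)
      = compensatedExp θ X p t ω * (Real.exp (-(c * p (t + 1) ω)) * (1 + c * p (t + 1) ω)) := by
        simp only [h]; ring
    _ ≤ compensatedExp θ X p t ω * 1 := by
        gcongr
        · exact (compensatedExp_pos θ X p t ω).le
        · exact hdrift _
    _ = compensatedExp θ X p t ω := mul_one _

theorem supermartingale_compensatedExp [IsFiniteMeasure μ] (θ : ℝ)
    (hX01 : ∀ k, 1 ≤ k → ∀ ω, X k ω = 0 ∨ X k ω = 1)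
    (hXmeas : ∀ k, 1 ≤ k → StronglyMeasurable[ℱ k] (X k))
    (hpmeas : ∀ k, 1 ≤ k → StronglyMeasurable[ℱ (k - 1)] (p k))
    (hp01 : ∀ k, 1 ≤ k → ∀ ω, p k ω ∈ Set.Icc (0 : ℝ) 1)
    (hcond : ∀ k, 1 ≤ k → μ[X k | ℱ (k - 1)] =ᵐ[μ] p k) :
    Supermartingale (compensatedExp θ X p) ℱ μ :=
  supermartingale_nat (stronglyAdapted_compensatedExp θ hXmeas hpmeas)
    (integrable_compensatedExp θ hX01 hXmeas hpmeas hp01)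
    (condExp_compensatedExp_succ_le θ hX01 hXmeas hpmeas hp01 hcond)

end CompensatedExp

theorem le_three_halves_mul_add_of_log_two_mul_sub_lt {a b L : ℝ} (hb : 0 ≤ b) (hL : 0 ≤ L)
    (h : Real.log 2 * a - b < L) : a ≤ 3 / 2 * b + 1.45 * L := by
  have hlog2 := Real.log_two_gt_d9
  have ha : a * Real.log 2 ≤ (3 / 2 * b + 1.45 * L) * Real.log 2 := by nlinarith
  exact le_of_mul_le_mul_right ha (by linarith)

theorem one_le_mul_log_two_mul_rpow {t : ℝ} (ht : 1 ≤ t) :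
    1 ≤ 5.2 * Real.log (2 * t) ^ (1.4 : ℝ) := by
  have hlog2 := Real.log_two_gt_d9
  have hlog2' := Real.log_two_lt_d9
  have h2t : Real.log 2 ≤ Real.log (2 * t) := Real.log_le_log two_pos (by linarith)
  calc (1 : ℝ) ≤ 5.2 * Real.log 2 ^ (2 : ℝ) := by
        rw [Real.rpow_two]; nlinarith
    _ ≤ 5.2 * Real.log 2 ^ (1.4 : ℝ) := by
        gcongr 5.2 * ?_
        exact Real.rpow_le_rpow_of_exponent_ge (by linarith) (by linarith) (by norm_num)
    _ ≤ 5.2 * Real.log (2 * t) ^ (1.4 : ℝ) := by gcongr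

theorem log_one_div_le_log_mul_log_two_mul_rpow_div {t δ : ℝ} (ht : 1 ≤ t) (hδ : 0 < δ) :
    Real.log (1 / δ) ≤ Real.log (5.2 * Real.log (2 * t) ^ (1.4 : ℝ) / δ) :=
  Real.log_le_log (by positivity) (div_le_div_of_nonneg_right (one_le_mul_log_two_mul_rpow ht) hδ.le)

theorem sum_le_of_compensatedExp_log_two_lt {Ω : Type*} {X p : ℕ → Ω → ℝ} {δ : ℝ} (hδ0 : 0 < δ)
    (hδ1 : δ < 1) {t : ℕ} (ht : 1 ≤ t) {ω : Ω} (hp : 0 ≤ ∑ k ∈ Icc 1 t, p k ω)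
    (hlt : compensatedExp (Real.log 2) X p t ω < 1 / δ) :
    ∑ k ∈ Icc 1 t, X k ω ≤
      3 / 2 * ∑ k ∈ Icc 1 t, p k ω + 1.45 * Real.log (5.2 * Real.log (2 * t) ^ (1.4 : ℝ) / δ) := by
  have hlog : Real.log 2 * ∑ k ∈ Icc 1 t, X k ω - ∑ k ∈ Icc 1 t, p k ω < Real.log (1 / δ) := by
    rw [Real.lt_log_iff_exp_lt (by positivity)]
    simpa [compensatedExp, Real.exp_log two_pos, show (2 : ℝ) - 1 = 1 by norm_num] using hlt
  have hsum := le_three_halves_mul_add_of_log_two_mul_sub_lt hp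
    (Real.log_nonneg (by rw [le_div_iff₀ hδ0]; linarith)) hlog
  have hL := log_one_div_le_log_mul_log_two_mul_rpow_div (t := t) (by exact_mod_cast ht) hδ0
  linarith

theorem stmt_15_general {Ω : Type*} {m0 : MeasurableSpace Ω} (μ : Measure Ω) [IsProbabilityMeasure μ]
    (ℱ : Filtration ℕ m0) (X : ℕ → Ω → ℝ) (p : ℕ → Ω → ℝ)
    (hX01 : ∀ k, 1 ≤ k → ∀ ω, X k ω = 0 ∨ X k ω = 1)
    (hXmeas : ∀ k, 1 ≤ k → StronglyMeasurable[ℱ k] (X k))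
    (hpmeas : ∀ k, 1 ≤ k → StronglyMeasurable[ℱ (k - 1)] (p k))
    (hp01 : ∀ k, 1 ≤ k → ∀ ω, p k ω ∈ Set.Icc (0 : ℝ) 1)
    (hcond : ∀ k, 1 ≤ k → μ[X k | ℱ (k - 1)] =ᵐ[μ] p k)
    (δ : ℝ) (hδ : δ ∈ Set.Ioo (0 : ℝ) 1) :
    ENNReal.ofReal (1 - δ) ≤
      μ {ω | ∀ t : ℕ, 1 ≤ t →
        ∑ k ∈ Finset.Icc 1 t, X k ω ≤
          (3 / 2) * ∑ k ∈ Finset.Icc 1 t, p k ω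
            + 1.45 * Real.log (5.2 * Real.log (2 * t) ^ (1.4 : ℝ) / δ)} := by
  obtain ⟨hδ0, hδ1⟩ := hδ
  set f := compensatedExp (Real.log 2) X p
  set A := {ω | ∃ n, 1 / δ ≤ f n ω}
  have hA : μ A ≤ ENNReal.ofReal δ := by
    have h := (supermartingale_compensatedExp (Real.log 2) hX01 hXmeas hpmeas hp01
      hcond).measure_exists_le_le (fun n ω => (compensatedExp_pos _ X p n ω).le)
      (one_div_pos.2 hδ0)
    rwa [show ∫ ω, f 0 ω ∂μ = 1 by simp [f, compensatedExp_zero], one_div_one_div] at h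
  calc ENNReal.ofReal (1 - δ) = 1 - ENNReal.ofReal δ := by
        rw [ENNReal.ofReal_sub _ hδ0.le, ENNReal.ofReal_one]
    _ ≤ 1 - μ A := tsub_le_tsub_left hA 1
    _ ≤ μ Aᶜ := tsub_le_iff_left.2 (by simpa using measure_union_le (μ := μ) A Aᶜ)
    _ ≤ _ := measure_mono fun ω hω t ht => sum_le_of_compensatedExp_log_two_lt hδ0 hδ1 ht
      (sum_nonneg fun k hk => (hp01 k (mem_Icc.1 hk).1 ω).1) (not_le.1 fun h => hω ⟨t, h⟩)

/-- Time-uniform control of the number of rounds a base learner is played in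
terms of the sum of its (predictable) selection probabilities. -/
theorem stmt_15 {Ω : Type*} {m0 : MeasurableSpace Ω} (μ : Measure Ω) [IsProbabilityMeasure μ]
    (ℱ : Filtration ℕ m0) (X : ℕ → Ω → ℝ) (p : ℕ → Ω → ℝ) (p₁ : ℝ)
    (hX01 : ∀ k, 1 ≤ k → ∀ ω, X k ω = 0 ∨ X k ω = 1)
    (hXmeas : ∀ k, 1 ≤ k → StronglyMeasurable[ℱ k] (X k))
    (hpmeas : ∀ k, 1 ≤ k → StronglyMeasurable[ℱ (k - 1)] (p k))
    (hp01 : ∀ k, 1 ≤ k → ∀ ω, p k ω ∈ Set.Icc (0 : ℝ) 1)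
    (hcond : ∀ k, 1 ≤ k → μ[X k | ℱ (k - 1)] =ᵐ[μ] p k)
    (hp₁ : ∀ ω, p 1 ω = p₁) (hp₁pos : 0 < p₁)
    (hvar : ∀ t : ℕ, ∀ᵐ ω ∂μ, ∑ k ∈ Finset.Icc 1 t, p k ω * (1 - p k ω) ≤ p₁ * t)
    (δ : ℝ) (hδ : δ ∈ Set.Ioo (0 : ℝ) 1) :
    ENNReal.ofReal (1 - δ) ≤
      μ {ω | ∀ t : ℕ, 1 ≤ t →
        ∑ k ∈ Finset.Icc 1 t, X k ω ≤
          (3 / 2) * ∑ k ∈ Finset.Icc 1 t, p k ω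
            + 1.45 * Real.log (5.2 * Real.log (2 * t) ^ (1.4 : ℝ) / δ)} :=
  stmt_15_general μ ℱ X p hX01 hXmeas hpmeas hp01 hcond δ hδ
end

section
/- Let α ≥ 0, δ ∈ (0, 1), and T a positive integer. Let (Ω, 𝓕, P) be a probability space with a filtration (𝓕_k)_{k≥0}, and for each k let W_k ∈ {0,1} and Δ_k be 𝓕_k-measurable random variables and p_k an 𝓕_{k−1}-measurable random variable with values in [0, 1], such that for every ε ∈ (0, 1/2], P( W_k = 1 and |Δ_k| ≤ ε | 𝓕_{k−1} ) ≤ p_k · ε^α almost surely. Then with probability at least 1 − log₂(12T) · δ, simultaneously for all t ∈ [T] and all ε ∈ (0, 1/2): Σ_{k=1}^t W_k · 1{|Δ_k| ≤ ε} ≤ 3 ε^α · Σ_{k=1}^t p_k + 2 · L(t, δ), where L(t, δ) = log( 5.2 · (log(2t))^{1.4} / δ ). -/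
/-!
For a margin level `η`, let `Sₜ(η)` count the rounds `k ≤ t` with `W k = 1` and `|Δ k| ≤ η`, and
let `Vₜ = ∑_{k ≤ t} p k`. The low-noise condition bounds the conditional mean of each increment of
`Sₜ(η)` by `η ^ α p k`, which makes `exp (Sₜ(η) / 2 - (√e - 1) η ^ α Vₜ)` a nonnegative
supermartingale started at `1`; by Ville's inequality it stays below `1 / δ` up to time `T` outside
an event of probability `δ`. A union bound over the `⌊log₂ T⌋ + 3 ≤ log₂ (12 T)` levels of the grid
`η ^ α = 2⁻ⁱ` leaves an event on which `Sₜ(η) ≤ (3/2) η ^ α Vₜ + 2 log (1 / δ)` at every level. An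
arbitrary `ε` is rounded up to a level with `η ^ α ≤ 2 ε ^ α`, or else to the last level, where
`η ^ α Vₜ ≤ 1 / 2`; the remaining constant is absorbed by `2 log (5.2 (log 2t) ^ 1.4) ≥ 2 log 2`.
-/

open MeasureTheory Finset

theorem Real.exp_mul_le_one_add_mul {θ x : ℝ} (hx₀ : 0 ≤ x) (hx₁ : x ≤ 1) :
    Real.exp (θ * x) ≤ 1 + (Real.exp θ - 1) * x := by
  have := convexOn_exp.2 (Set.mem_univ 0) (Set.mem_univ θ) (sub_nonneg.2 hx₁) hx₀ (by ring)
  simp only [smul_eq_mul, mul_zero, zero_add, Real.exp_zero, mul_one] at this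
  rw [mul_comm θ]; linarith

namespace MeasureTheory

variable {Ω : Type*} {m0 : MeasurableSpace Ω} {μ : Measure Ω} {ℱ : Filtration ℕ m0}

/-- **Ville's inequality** on a finite horizon, by optional stopping when `f` first reaches `c`. -/
theorem Supermartingale.measure_exists_le_le_s16 [IsFiniteMeasure μ] {f : ℕ → Ω → ℝ}
    (hf : Supermartingale f ℱ μ) (hnonneg : 0 ≤ f) {c : ℝ} (hc : 0 < c) (T : ℕ) :
    μ {ω | ∃ t ≤ T, c ≤ f t ω} ≤ ENNReal.ofReal ((∫ ω, f 0 ω ∂μ) / c) := by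
  set A := {ω | ∃ t ≤ T, c ≤ f t ω}
  set τ : Ω → ℕ∞ := fun ω => (hittingBtwn f (Set.Ici c) 0 T ω : ℕ)
  have hτ : IsStoppingTime ℱ τ :=
    hf.stronglyAdapted.adapted.isStoppingTime_hittingBtwn measurableSet_Ici
  have hτT : ∀ ω, τ ω ≤ T := fun ω => ENat.natCast_le_natCast.2 (hittingBtwn_le ω)
  have hint : Integrable (stoppedValue f τ) μ := integrable_stoppedValue ℕ hτ hf.integrable hτT
  have hA : MeasurableSet A := by
    have : A = ⋃ t ∈ Set.Iic T, {ω | c ≤ f t ω} := by ext; simp [A]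
    rw [this]
    exact .biUnion (Set.to_countable _) fun t _ =>
      measurableSet_le measurable_const ((hf.stronglyAdapted t).measurable.mono (ℱ.le t) le_rfl)
  have hstop : ∫ ω, stoppedValue f τ ω ∂μ ≤ ∫ ω, f 0 ω ∂μ := by
    have := hf.neg.expected_stoppedValue_mono (isStoppingTime_const ℱ 0) hτ (fun ω => bot_le) hτT
    simpa [stoppedValue, integral_neg] using this
  have hc_le : ∀ ω ∈ A, c ≤ stoppedValue f τ ω := by
    rintro ω ⟨t, htT, ht⟩
    exact stoppedValue_hittingBtwn_mem ⟨t, ⟨Nat.zero_le t, htT⟩, ht⟩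
  have hmass : c * μ.real A ≤ ∫ ω, stoppedValue f τ ω ∂μ :=
    calc c * μ.real A = ∫ _ in A, c ∂μ := by rw [setIntegral_const, smul_eq_mul, mul_comm]
      _ ≤ ∫ ω in A, stoppedValue f τ ω ∂μ :=
        setIntegral_mono_on integrableOn_const hint.integrableOn hA hc_le
      _ ≤ ∫ ω, stoppedValue f τ ω ∂μ :=
        setIntegral_le_integral hint (.of_forall fun ω => hnonneg _ ω)
  rw [← ofReal_measureReal]
  exact ENNReal.ofReal_le_ofReal ((le_div_iff₀' hc).2 (hmass.trans hstop))

theorem condExp_exp_mul_le [IsFiniteMeasure μ] {m : MeasurableSpace Ω} (hm : m ≤ m0) (θ : ℝ)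
    {X : Ω → ℝ} (hX : Measurable[m0] X) (hX01 : ∀ ω, X ω ∈ Set.Icc (0 : ℝ) 1) :
    μ[fun ω => Real.exp (θ * X ω) | m] ≤ᵐ[μ] fun ω => 1 + (Real.exp θ - 1) * μ[X | m] ω := by
  have hXint : Integrable X μ := .of_bound hX.aestronglyMeasurable 1 (.of_forall fun ω => by
    rw [Real.norm_eq_abs, abs_of_nonneg (hX01 ω).1]; exact (hX01 ω).2)
  have hlin : μ[fun ω => 1 + (Real.exp θ - 1) * X ω | m]
      =ᵐ[μ] fun ω => 1 + (Real.exp θ - 1) * μ[X | m] ω := by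
    have h := condExp_add (integrable_const (1 : ℝ)) (hXint.smul (Real.exp θ - 1)) m
    filter_upwards [h, condExp_smul (μ := μ) (Real.exp θ - 1) X m] with ω h h'
    rw [Pi.add_apply, h', condExp_const hm] at h
    exact h
  refine (condExp_mono ?_ ((integrable_const 1).add (hXint.const_mul _))
    (.of_forall fun ω => Real.exp_mul_le_one_add_mul (hX01 ω).1 (hX01 ω).2)).trans hlin.le
  refine .of_bound (by fun_prop) (Real.exp |θ|) (.of_forall fun ω => ?_)
  rw [Real.norm_eq_abs, abs_of_pos (Real.exp_pos _), Real.exp_le_exp]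
  nlinarith [le_abs_self θ, neg_abs_le θ, (hX01 ω).1, (hX01 ω).2]

noncomputable def expCompensated (θ : ℝ) (X q : ℕ → Ω → ℝ) (t : ℕ) (ω : Ω) : ℝ :=
  Real.exp (θ * ∑ k ∈ Icc 1 t, X k ω - (Real.exp θ - 1) * ∑ k ∈ Icc 1 t, q k ω)

section expCompensated

variable {θ : ℝ} {X q : ℕ → Ω → ℝ}

@[simp]
theorem expCompensated_zero : expCompensated θ X q 0 = 1 := by
  ext; simp [expCompensated]

theorem expCompensated_pos (t : ℕ) (ω : Ω) : 0 < expCompensated θ X q t ω := Real.exp_pos _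

theorem expCompensated_succ (t : ℕ) (ω : Ω) :
    expCompensated θ X q (t + 1) ω = expCompensated θ X q t ω
      * Real.exp (-((Real.exp θ - 1) * q (t + 1) ω)) * Real.exp (θ * X (t + 1) ω) := by
  simp only [expCompensated, ← Real.exp_add, sum_Icc_succ_top (Nat.le_add_left 1 t)]
  ring_nf

theorem expCompensated_le (hθ : 0 ≤ θ) (hX : ∀ k, 1 ≤ k → ∀ ω, X k ω ≤ 1)
    (hq : ∀ k, 1 ≤ k → ∀ ω, 0 ≤ q k ω) (t : ℕ) (ω : Ω) :
    expCompensated θ X q t ω ≤ Real.exp (θ * t) := by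
  have hS : ∑ k ∈ Icc 1 t, X k ω ≤ t := by
    simpa using sum_le_sum fun k hk => hX k (mem_Icc.1 hk).1 ω
  have hV : 0 ≤ ∑ k ∈ Icc 1 t, q k ω := sum_nonneg fun k hk => hq k (mem_Icc.1 hk).1 ω
  have hθ' : 0 ≤ Real.exp θ - 1 := by linarith [Real.add_one_le_exp θ]
  exact Real.exp_le_exp.2 (by nlinarith [mul_le_mul_of_nonneg_left hS hθ', mul_nonneg hθ' hV])

theorem stronglyAdapted_expCompensated (θ : ℝ)
    (hX : ∀ k, 1 ≤ k → StronglyMeasurable[ℱ k] (X k))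
    (hq : ∀ k, 1 ≤ k → StronglyMeasurable[ℱ (k - 1)] (q k)) :
    StronglyAdapted ℱ (expCompensated θ X q) := fun t => by
  have hS : StronglyMeasurable[ℱ t] fun ω => ∑ k ∈ Icc 1 t, X k ω :=
    Finset.stronglyMeasurable_fun_sum _ fun k hk =>
      (hX k (mem_Icc.1 hk).1).mono (ℱ.mono (mem_Icc.1 hk).2)
  have hV : StronglyMeasurable[ℱ t] fun ω => ∑ k ∈ Icc 1 t, q k ω :=
    Finset.stronglyMeasurable_fun_sum _ fun k hk =>
      (hq k (mem_Icc.1 hk).1).mono (ℱ.mono (by grind))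
  exact Real.continuous_exp.comp_stronglyMeasurable ((hS.const_mul θ).sub (hV.const_mul _))

/-- Given `ℱ t`, `𝔼[exp (θ X (t+1))] ≤ 1 + (e^θ - 1) q (t+1) ≤ exp ((e^θ - 1) q (t+1))`, the first
step by convexity of `exp`. -/
theorem supermartingale_expCompensated [IsFiniteMeasure μ] (hθ : 0 ≤ θ)
    (hX01 : ∀ k, 1 ≤ k → ∀ ω, X k ω ∈ Set.Icc (0 : ℝ) 1)
    (hX : ∀ k, 1 ≤ k → StronglyMeasurable[ℱ k] (X k))
    (hq0 : ∀ k, 1 ≤ k → ∀ ω, 0 ≤ q k ω)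
    (hq : ∀ k, 1 ≤ k → StronglyMeasurable[ℱ (k - 1)] (q k))
    (hcond : ∀ k, 1 ≤ k → μ[X k | ℱ (k - 1)] ≤ᵐ[μ] q k) :
    Supermartingale (expCompensated θ X q) ℱ μ := by
  set M := expCompensated θ X q
  set c := Real.exp θ - 1
  have hadapted := stronglyAdapted_expCompensated θ hX hq
  have hint : ∀ t, Integrable (M t) μ := fun t =>
    .of_bound ((hadapted t).mono (ℱ.le t)).aestronglyMeasurable (Real.exp (θ * t))
      (.of_forall fun ω => by
        rw [Real.norm_eq_abs, abs_of_pos (expCompensated_pos t ω)]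
        exact expCompensated_le hθ (fun k hk ω => (hX01 k hk ω).2) hq0 t ω)
  refine supermartingale_nat hadapted hint fun t => ?_
  set G : Ω → ℝ := fun ω => M t ω * Real.exp (-(c * q (t + 1) ω))
  set Y : Ω → ℝ := fun ω => Real.exp (θ * X (t + 1) ω)
  have hMGY : M (t + 1) = G * Y := funext (expCompensated_succ t)
  have hG : StronglyMeasurable[ℱ t] G := (hadapted t).mul
    (Real.continuous_exp.comp_stronglyMeasurable ((hq (t + 1) (by omega)).const_mul c).neg)
  have hXm : Measurable (X (t + 1)) := ((hX (t + 1) (by omega)).mono (ℱ.le _)).measurable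
  have hY : Integrable Y μ := .of_bound (by fun_prop) (Real.exp θ) (.of_forall fun ω => by
    rw [Real.norm_eq_abs, abs_of_pos (Real.exp_pos _), Real.exp_le_exp]
    nlinarith [(hX01 (t + 1) (by omega) ω).1, (hX01 (t + 1) (by omega) ω).2])
  have hpull : μ[G * Y | ℱ t] =ᵐ[μ] G * μ[Y | ℱ t] :=
    condExp_mul_of_stronglyMeasurable_left hG (hMGY ▸ hint (t + 1)) hY
  filter_upwards [hpull, condExp_exp_mul_le (ℱ.le t) θ hXm (hX01 (t + 1) (by omega)),
    hcond (t + 1) (by omega)] with ω hpull hY hcond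
  have hGω : 0 ≤ G ω := mul_nonneg (expCompensated_pos t ω).le (Real.exp_pos _).le
  have hc : 0 ≤ c := by linarith [Real.add_one_le_exp θ]
  calc μ[M (t + 1) | ℱ t] ω = G ω * μ[Y | ℱ t] ω := by rw [hMGY, hpull]; rfl
    _ ≤ G ω * (1 + c * q (t + 1) ω) := by gcongr; exact hY.trans (by gcongr; exact hcond)
    _ ≤ G ω * Real.exp (c * q (t + 1) ω) := by
      gcongr; linarith [Real.add_one_le_exp (c * q (t + 1) ω)]
    _ = M t ω := by rw [mul_assoc, ← Real.exp_add, neg_add_cancel, Real.exp_zero, mul_one]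

end expCompensated

theorem measure_exists_inv_le_expCompensated_le [IsProbabilityMeasure μ] {θ δ : ℝ} (hθ : 0 ≤ θ)
    (hδ : 0 < δ) {X q : ℕ → Ω → ℝ}
    (hX01 : ∀ k, 1 ≤ k → ∀ ω, X k ω ∈ Set.Icc (0 : ℝ) 1)
    (hX : ∀ k, 1 ≤ k → StronglyMeasurable[ℱ k] (X k))
    (hq0 : ∀ k, 1 ≤ k → ∀ ω, 0 ≤ q k ω)
    (hq : ∀ k, 1 ≤ k → StronglyMeasurable[ℱ (k - 1)] (q k))
    (hcond : ∀ k, 1 ≤ k → μ[X k | ℱ (k - 1)] ≤ᵐ[μ] q k) (T : ℕ) :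
    μ {ω | ∃ t ≤ T, δ⁻¹ ≤ expCompensated θ X q t ω} ≤ ENNReal.ofReal δ := by
  simpa using (supermartingale_expCompensated hθ hX01 hX hq0 hq hcond).measure_exists_le_le_s16
    (fun t ω => (expCompensated_pos t ω).le) (inv_pos.2 hδ) T

theorem ofReal_one_sub_card_mul_le_measure [IsProbabilityMeasure μ] {ι : Type*} (s : Finset ι)
    {B : ι → Set Ω} {A : Set Ω} {δ : ℝ} (hδ : 0 ≤ δ) (hB : ∀ i ∈ s, μ (B i) ≤ ENNReal.ofReal δ)
    (hA : Aᶜ ⊆ ⋃ i ∈ s, B i) :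
    ENNReal.ofReal (1 - #s * δ) ≤ μ A := by
  have hAc : μ Aᶜ ≤ ENNReal.ofReal (#s * δ) :=
    calc μ Aᶜ ≤ ∑ i ∈ s, μ (B i) := (measure_mono hA).trans (measure_biUnion_finset_le s B)
      _ ≤ ∑ _i ∈ s, ENNReal.ofReal δ := sum_le_sum hB
      _ = ENNReal.ofReal (#s * δ) := by
        rw [sum_const, nsmul_eq_mul, ENNReal.ofReal_mul (by positivity), ENNReal.ofReal_natCast]
  rw [ENNReal.ofReal_sub _ (by positivity), ENNReal.ofReal_one, tsub_le_iff_right]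
  calc 1 = μ (A ∪ Aᶜ) := by rw [Set.union_compl_self, measure_univ]
    _ ≤ μ A + μ Aᶜ := measure_union_le A Aᶜ
    _ ≤ μ A + ENNReal.ofReal (#s * δ) := by gcongr

end MeasureTheory

theorem stronglyMeasurable_ite_eq_one_and_abs_le {Ω : Type*} {m : MeasurableSpace Ω}
    {W Δ : Ω → ℝ} (hW : StronglyMeasurable[m] W) (hΔ : StronglyMeasurable[m] Δ) (η : ℝ) :
    StronglyMeasurable[m] fun ω => if W ω = 1 ∧ |Δ ω| ≤ η then (1 : ℝ) else 0 :=
  .ite ((hW.measurable (measurableSet_singleton 1)).inter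
    (measurableSet_le hΔ.measurable.abs measurable_const)) stronglyMeasurable_const
    stronglyMeasurable_const

/-- Level `i` of the grid `η ^ α = 2⁻ⁱ`, capped at `1 / 2`; for `α = 0`, `α⁻¹ = 0` makes every
level `1 / 2`. -/
noncomputable def marginGrid (α : ℝ) (i : ℕ) : ℝ := min (1 / 2) ((((2 : ℝ) ^ i)⁻¹) ^ α⁻¹)

section marginGrid

variable {α : ℝ}

theorem marginGrid_pos (i : ℕ) : 0 < marginGrid α i :=
  lt_min (by norm_num) (by positivity)

theorem marginGrid_rpow_le (hα : 0 < α) (i : ℕ) : marginGrid α i ^ α ≤ ((2 : ℝ) ^ i)⁻¹ :=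
  calc marginGrid α i ^ α ≤ ((((2 : ℝ) ^ i)⁻¹) ^ α⁻¹) ^ α := by
        gcongr; exact (marginGrid_pos i).le; exact min_le_right _ _
    _ = ((2 : ℝ) ^ i)⁻¹ := Real.rpow_inv_rpow (by positivity) hα.ne'

theorem exists_marginGrid (hα : 0 ≤ α) {ε : ℝ} (hε₀ : 0 < ε) (hε : ε ≤ 1 / 2) (N : ℕ) :
    ∃ i ≤ N, ε ≤ marginGrid α i ∧
      (marginGrid α i ^ α ≤ 2 * ε ^ α ∨ marginGrid α i ^ α ≤ ((2 : ℝ) ^ N)⁻¹) := by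
  rcases hα.eq_or_lt with rfl | hα
  · refine ⟨0, N.zero_le, ?_, Or.inl ?_⟩
    · exact le_min hε (by simpa using hε.trans (by norm_num : (1 : ℝ) / 2 ≤ 1))
    · norm_num
  have hεα : 0 < ε ^ α := by positivity
  obtain ⟨n, hn, hn'⟩ := exists_nat_pow_near (one_le_inv₀ hεα |>.2
    (Real.rpow_le_one hε₀.le (by linarith) hα.le)) one_lt_two
  have hεn : ε ^ α ≤ ((2 : ℝ) ^ n)⁻¹ := by rwa [le_inv_comm₀ hεα (by positivity)]
  have hle : ∀ i ≤ n, ε ≤ marginGrid α i := fun i hi =>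
    le_min hε <| (Real.le_rpow_inv_iff_of_pos hε₀.le (by positivity) hα).2 <|
      hεn.trans (inv_anti₀ (by positivity) (pow_le_pow_right₀ one_le_two hi))
  rcases le_or_gt n N with hnN | hNn
  · refine ⟨n, hnN, hle n le_rfl, Or.inl ((marginGrid_rpow_le hα n).trans ?_)⟩
    rw [inv_lt_comm₀ hεα (by positivity), pow_succ, mul_inv] at hn'
    linarith
  · exact ⟨N, le_rfl, hle N hNn.le, Or.inr (marginGrid_rpow_le hα N)⟩

end marginGrid

theorem Real.exp_half_le : Real.exp (1 / 2) ≤ 7 / 4 := by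
  have h : Real.exp (1 / 2) * Real.exp (1 / 2) = Real.exp 1 := by rw [← Real.exp_add]; norm_num
  nlinarith [Real.exp_one_lt_d9, Real.exp_pos (1 / 2)]

theorem Real.two_le_mul_log_rpow {t : ℝ} (ht : 1 ≤ t) :
    2 ≤ 5.2 * Real.log (2 * t) ^ (1.4 : ℝ) := by
  have hlog2 := Real.log_two_gt_d9
  have h2t : Real.log 2 ≤ Real.log (2 * t) := Real.log_le_log two_pos (by linarith)
  have hpow : Real.log 2 ^ (2 : ℝ) ≤ Real.log (2 * t) ^ (1.4 : ℝ) :=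
    calc Real.log 2 ^ (2 : ℝ) ≤ Real.log 2 ^ (1.4 : ℝ) :=
          Real.rpow_le_rpow_of_exponent_ge (by positivity) (by linarith [Real.log_two_lt_d9])
            (by norm_num)
      _ ≤ Real.log (2 * t) ^ (1.4 : ℝ) := by gcongr
  rw [Real.rpow_two] at hpow
  nlinarith

theorem Nat.two_mul_le_two_pow_log_add_two (T : ℕ) : 2 * T ≤ 2 ^ (Nat.log 2 T + 2) := by
  have := Nat.lt_pow_succ_log_self one_lt_two T
  rw [pow_succ] at this ⊢
  omega

theorem Nat.log_add_three_le_logb {T : ℕ} (hT : 0 < T) :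
    (Nat.log 2 T + 3 : ℝ) ≤ Real.logb 2 (12 * T) := by
  have h8 : (3 : ℝ) ≤ Real.logb 2 12 := by
    rw [Real.le_logb_iff_rpow_le one_lt_two (by norm_num)]; norm_num
  rw [Real.logb_mul (by norm_num) (by positivity)]
  have hlog : (Nat.log 2 T : ℝ) ≤ Real.logb 2 T := by exact_mod_cast Real.natLog_le_logb T 2
  linarith

theorem sum_mul_ite_le_sum_ite {w d : ℕ → ℝ} {s : Finset ℕ} (hw : ∀ k ∈ s, w k = 0 ∨ w k = 1)
    {ε η : ℝ} (hεη : ε ≤ η) :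
    ∑ k ∈ s, w k * (if |d k| ≤ ε then (1 : ℝ) else 0) ≤
      ∑ k ∈ s, if w k = 1 ∧ |d k| ≤ η then (1 : ℝ) else 0 := by
  refine sum_le_sum fun k hk => ?_
  rcases hw k hk with h | h <;> simp only [h] <;> split_ifs <;> grind

theorem sum_mul_ite_le_of_forall_marginGrid {α δ : ℝ} (hα : 0 ≤ α) (hδ : 0 < δ) {T N t : ℕ}
    (hTN : 2 * T ≤ 2 ^ N) (ht : t ∈ Icc 1 T) {w d q : ℕ → ℝ}
    (hw : ∀ k, 1 ≤ k → w k = 0 ∨ w k = 1) (hq : ∀ k, 1 ≤ k → q k ∈ Set.Icc (0 : ℝ) 1)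
    (hgood : ∀ i ≤ N, Real.exp ((1 / 2) *
        ∑ k ∈ Icc 1 t, (if w k = 1 ∧ |d k| ≤ marginGrid α i then (1 : ℝ) else 0)
        - (Real.exp (1 / 2) - 1) * ∑ k ∈ Icc 1 t, q k * marginGrid α i ^ α) < δ⁻¹)
    {ε : ℝ} (hε₀ : 0 < ε) (hε : ε < 1 / 2) :
    ∑ k ∈ Icc 1 t, w k * (if |d k| ≤ ε then (1 : ℝ) else 0) ≤
      3 * ε ^ α * ∑ k ∈ Icc 1 t, q k + 2 * Real.log (5.2 * Real.log (2 * t) ^ (1.4 : ℝ) / δ) := by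
  obtain ⟨ht₁, htT⟩ := mem_Icc.1 ht
  obtain ⟨i, hiN, hεη, hη⟩ := exists_marginGrid hα hε₀ hε.le N
  set η := marginGrid α i
  set V := ∑ k ∈ Icc 1 t, q k
  have hV₀ : 0 ≤ V := sum_nonneg fun k hk => (hq k (mem_Icc.1 hk).1).1
  have hVT : V ≤ T := by
    have : V ≤ t := by simpa using sum_le_sum fun k hk => (hq k (mem_Icc.1 hk).1).2
    exact this.trans (by exact_mod_cast htT)
  have hηα : 0 ≤ η ^ α := Real.rpow_nonneg (marginGrid_pos i).le α
  have hS : ∑ k ∈ Icc 1 t, (if w k = 1 ∧ |d k| ≤ η then (1 : ℝ) else 0)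
      ≤ 3 / 2 * (η ^ α * V) + 2 * Real.log δ⁻¹ := by
    have h := (Real.lt_log_iff_exp_lt (inv_pos.2 hδ)).2 (hgood i hiN)
    rw [← sum_mul] at h
    nlinarith [Real.exp_half_le, mul_nonneg hV₀ hηα]
  have hηV : η ^ α * V ≤ 2 * ε ^ α * V ∨ η ^ α * V ≤ 1 / 2 := by
    refine hη.imp (fun h => by gcongr) fun h => ?_
    have hT : (0 : ℝ) < T := by exact_mod_cast ht₁.trans htT
    calc η ^ α * V ≤ ((2 : ℝ) ^ N)⁻¹ * T := by gcongr
      _ ≤ (2 * (T : ℝ))⁻¹ * T := by gcongr; exact_mod_cast hTN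
      _ = 1 / 2 := by field_simp
  have hlog : 3 / 4 + 2 * Real.log δ⁻¹ ≤ 2 * Real.log (5.2 * Real.log (2 * t) ^ (1.4 : ℝ) / δ) := by
    have h2 := Real.two_le_mul_log_rpow (t := t) (by exact_mod_cast ht₁)
    rw [Real.log_div (by linarith) hδ.ne', Real.log_inv]
    linarith [Real.log_le_log two_pos h2, Real.log_two_gt_d9]
  calc ∑ k ∈ Icc 1 t, w k * (if |d k| ≤ ε then (1 : ℝ) else 0)
      ≤ ∑ k ∈ Icc 1 t, (if w k = 1 ∧ |d k| ≤ η then (1 : ℝ) else 0) :=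
        sum_mul_ite_le_sum_ite (fun k hk => hw k (mem_Icc.1 hk).1) hεη
    _ ≤ 3 / 2 * (η ^ α * V) + 2 * Real.log δ⁻¹ := hS
    _ ≤ _ := by rcases hηV with h | h <;> nlinarith [mul_nonneg (Real.rpow_nonneg hε₀.le α) hV₀]

/-- Time- and level-uniform bound on the number of small-margin rounds on which
a given base learner is selected, under the Mammen–Tsybakov low-noise
condition with exponent `α`. -/
theorem stmt_16 {Ω : Type*} {m0 : MeasurableSpace Ω} (μ : Measure Ω) [IsProbabilityMeasure μ]
    (α δ : ℝ) (hα : 0 ≤ α) (hδ : δ ∈ Set.Ioo (0 : ℝ) 1) (T : ℕ) (hT : 0 < T)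
    (ℱ : Filtration ℕ m0) (W Δ p : ℕ → Ω → ℝ)
    (hW01 : ∀ k, 1 ≤ k → ∀ ω, W k ω = 0 ∨ W k ω = 1)
    (hWmeas : ∀ k, 1 ≤ k → StronglyMeasurable[ℱ k] (W k))
    (hΔmeas : ∀ k, 1 ≤ k → StronglyMeasurable[ℱ k] (Δ k))
    (hpmeas : ∀ k, 1 ≤ k → StronglyMeasurable[ℱ (k - 1)] (p k))
    (hp01 : ∀ k, 1 ≤ k → ∀ ω, p k ω ∈ Set.Icc (0 : ℝ) 1)
    (hcond : ∀ k, 1 ≤ k → ∀ ε : ℝ, 0 < ε → ε ≤ 1 / 2 →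
      ∀ᵐ ω ∂μ,
        (μ[fun ω' => if W k ω' = 1 ∧ |Δ k ω'| ≤ ε then (1 : ℝ) else 0 | ℱ (k - 1)]) ω
          ≤ p k ω * ε ^ α) :
    ENNReal.ofReal (1 - Real.logb 2 (12 * T) * δ) ≤
      μ {ω | ∀ t ∈ Finset.Icc 1 T, ∀ ε : ℝ, 0 < ε → ε < 1 / 2 →
        ∑ k ∈ Finset.Icc 1 t, W k ω * (if |Δ k ω| ≤ ε then (1 : ℝ) else 0) ≤
          3 * ε ^ α * ∑ k ∈ Finset.Icc 1 t, p k ω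
            + 2 * Real.log (5.2 * Real.log (2 * t) ^ (1.4 : ℝ) / δ)} := by
  obtain ⟨hδ₀, -⟩ := hδ
  set N := Nat.log 2 T + 2
  set X : ℕ → ℕ → Ω → ℝ := fun i k ω => if W k ω = 1 ∧ |Δ k ω| ≤ marginGrid α i then 1 else 0
  set q : ℕ → ℕ → Ω → ℝ := fun i k ω => p k ω * marginGrid α i ^ α
  have hbad : ∀ i ∈ range (N + 1),
      μ {ω | ∃ t ≤ T, δ⁻¹ ≤ expCompensated (1 / 2) (X i) (q i) t ω} ≤ ENNReal.ofReal δ :=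
    fun i _ => measure_exists_inv_le_expCompensated_le (by norm_num) hδ₀
      (fun k _ ω => by split_ifs <;> norm_num)
      (fun k hk => stronglyMeasurable_ite_eq_one_and_abs_le (hWmeas k hk) (hΔmeas k hk) _)
      (fun k hk ω => mul_nonneg (hp01 k hk ω).1 (Real.rpow_nonneg (marginGrid_pos i).le α))
      (fun k hk => (hpmeas k hk).mul_const _)
      (fun k hk => hcond k hk _ (marginGrid_pos i) (min_le_left _ _)) T
  refine le_trans ?_ (ofReal_one_sub_card_mul_le_measure _ hδ₀.le hbad fun ω hω => ?_)
  · gcongr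
    rw [card_range]
    exact_mod_cast Nat.log_add_three_le_logb hT
  · by_contra hU
    simp only [Set.mem_iUnion, Set.mem_ofPred_eq, mem_range, not_exists, not_and, not_le] at hU
    exact hω fun t ht ε hε₀ hε => sum_mul_ite_le_of_forall_marginGrid hα hδ₀
      (Nat.two_mul_le_two_pow_log_add_two T) ht (hW01 · · ω) (hp01 · · ω)
      (fun i hi => hU i (by omega) t (mem_Icc.1 ht).2) hε₀ hε
end
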